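/- arXiv:1709.00092 — 6 statements merged into one kernel-verified Lean document; each statement's English description precedes it below -/
import Mathlib

section
/- Let p be a positive integer, Ω₀ and Ω be p×p real symmetric positive definite matrices, Σ₀ = Ω₀⁻¹, and s ∈ ℝ^p a vector with nonnegative entries such that Σ₀ − (1/2)diag(s) is positive semidefinite. Assume Λmin(2diag(s) − diag(s)Ω₀diag(s)) ≥ c₀ and Λmax(Σ₀) ≤ c₀⁻¹ for some constant c₀ > 0. Then there exist constants c₁ > 0 and δ > 0 depending only on c₀ such that whenever ‖Ω − Ω₀‖₂ ≤ δ: the matrix 2diag(s) − diag(s)Ωdiag(s) is positive definite (so B^Ω is well defined), for every subset S ⊆ {1,…,p} the matrix B_{0,S}ᵀB_{0,S} is positive definite, and ‖B̃(Ω,S) − I_{|S|}‖₂ ≤ c₁‖Ω − Ω₀‖₂ uniformly over all S ⊆ {1,…,p}. -/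
open Matrix Finset
open scoped Classical BigOperators

noncomputable section

/-- Spectral norm (ℓ2 operator norm) of a real matrix. -/
def specNorm {m n : Type*} [Fintype m] [Fintype n] [DecidableEq n]
    (A : Matrix m n ℝ) : ℝ :=
  ‖LinearMap.toContinuousLinearMap (Matrix.toEuclideanLin A)‖

/-- Smallest eigenvalue (Rayleigh quotient inf) of a real symmetric matrix. -/
def lambdaMin {n : Type*} [Fintype n] (A : Matrix n n ℝ) : ℝ :=
  sInf {r | ∃ x : n → ℝ, ∑ i, (x i) ^ 2 = 1 ∧ r = x ⬝ᵥ A.mulVec x}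

/-- Largest eigenvalue (Rayleigh quotient sup) of a real symmetric matrix. -/
def lambdaMax {n : Type*} [Fintype n] (A : Matrix n n ℝ) : ℝ :=
  sSup {r | ∃ x : n → ℝ, ∑ i, (x i) ^ 2 = 1 ∧ r = x ⬝ᵥ A.mulVec x}

/-- Positive semidefinite square root (0 if the matrix is not psd). -/
def msqrt {n : Type*} [Fintype n] [DecidableEq n] (A : Matrix n n ℝ) : Matrix n n ℝ :=
  if h : A.PosSemidef then
    (h.1.eigenvectorUnitary : Matrix n n ℝ) * diagonal ((↑) ∘ (√·) ∘ h.1.eigenvalues) *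
      (star h.1.eigenvectorUnitary : Matrix n n ℝ) else 0

/-- Column submatrix with columns in `S`. -/
def colSub {m p : Type*} (A : Matrix m p ℝ) (S : Finset p) : Matrix m {j // j ∈ S} ℝ :=
  A.submatrix id (fun j => (j : p))

/-- `B^Ω`, the psd square root of `2 diag(s) - diag(s) Ω diag(s)`. -/
def Bmat {p : ℕ} (s : Fin p → ℝ) (Om : Matrix (Fin p) (Fin p) ℝ) :
    Matrix (Fin p) (Fin p) ℝ :=
  msqrt ((2 : ℝ) • Matrix.diagonal s - Matrix.diagonal s * Om * Matrix.diagonal s)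

/-- `B̃(Ω, S) = (B₀ₛᵀ B₀ₛ)^{-1/2} ((B^Ω_S)ᵀ B^Ω_S)^{1/2}`. -/
def Btilde {p : ℕ} (s : Fin p → ℝ) (Om₀ Om : Matrix (Fin p) (Fin p) ℝ)
    (S : Finset (Fin p)) : Matrix {j // j ∈ S} {j // j ∈ S} ℝ :=
  (msqrt ((colSub (Bmat s Om₀) S)ᵀ * colSub (Bmat s Om₀) S))⁻¹ *
    msqrt ((colSub (Bmat s Om) S)ᵀ * colSub (Bmat s Om) S)

set_option linter.unusedSectionVars false
set_option linter.unusedVariables false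
set_option maxHeartbeats 1000000

open scoped Matrix.Norms.L2Operator RealInnerProductSpace

section aux
variable {m n : Type*} [Fintype m] [Fintype n] [DecidableEq n] [DecidableEq m]

lemma specNorm_eq (A : Matrix m n ℝ) : specNorm A = ‖A‖ := rfl

lemma euc_norm_sq (x : EuclideanSpace ℝ n) : ‖x‖ ^ 2 = ∑ i, x i ^ 2 := by
  exact EuclideanSpace.real_norm_sq_eq x

lemma euc_inner (x y : EuclideanSpace ℝ n) : ⟪x, y⟫ = ∑ i, x i * y i := by
  simp [PiLp.inner_apply]
  exact Finset.sum_congr rfl fun i _ => mul_comm _ _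

lemma toEucLin_apply' (A : Matrix m n ℝ) (x : EuclideanSpace ℝ n) (i : m) :
    (Matrix.toEuclideanLin A x) i = (A *ᵥ (x : n → ℝ)) i := by
  rw [Matrix.toEuclideanLin_apply]

/-- mulVec as an element of Euclidean space -/
def mvE (A : Matrix m n ℝ) (x : EuclideanSpace ℝ n) : EuclideanSpace ℝ m :=
  Matrix.toEuclideanLin A x

lemma mvE_apply (A : Matrix m n ℝ) (x : EuclideanSpace ℝ n) (i : m) :
    mvE A x i = (A *ᵥ (x : n → ℝ)) i := toEucLin_apply' A x i

lemma norm_mvE_le (A : Matrix m n ℝ) (x : EuclideanSpace ℝ n) :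
    ‖mvE A x‖ ≤ specNorm A * ‖x‖ :=
  (LinearMap.toContinuousLinearMap (Matrix.toEuclideanLin A)).le_opNorm x

lemma specNorm_nonneg (A : Matrix m n ℝ) : 0 ≤ specNorm A := norm_nonneg _

lemma specNorm_le_bound (A : Matrix m n ℝ) (r : ℝ) (hr : 0 ≤ r)
    (h : ∀ x : EuclideanSpace ℝ n, ‖mvE A x‖ ≤ r * ‖x‖) : specNorm A ≤ r :=
  ContinuousLinearMap.opNorm_le_bound _ hr h

lemma sum_sq_mvE (A : Matrix m n ℝ) (x : EuclideanSpace ℝ n) :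
    ∑ i, (A *ᵥ (x : n → ℝ)) i ^ 2 = ‖mvE A x‖ ^ 2 := by
  rw [euc_norm_sq]
  exact Finset.sum_congr rfl fun i _ => by rw [mvE_apply]

lemma specNorm_le_bound' (A : Matrix m n ℝ) (r : ℝ) (hr : 0 ≤ r)
    (h : ∀ x : n → ℝ, ∑ i, (A *ᵥ x) i ^ 2 ≤ r ^ 2 * ∑ i, x i ^ 2) : specNorm A ≤ r := by
  refine specNorm_le_bound A r hr fun x => ?_
  have h2 : ‖mvE A x‖ ^ 2 ≤ (r * ‖x‖) ^ 2 := by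
    rw [← sum_sq_mvE, mul_pow, euc_norm_sq]
    exact h x
  have := Real.sqrt_le_sqrt h2
  rwa [Real.sqrt_sq (norm_nonneg _), Real.sqrt_sq (by positivity)] at this

end aux

section spectral
variable {n : Type*} [Fintype n] [DecidableEq n] {M : Matrix n n ℝ} (hM : M.IsHermitian)

lemma dot_eq_inner (x y : EuclideanSpace ℝ n) (A : Matrix n n ℝ) :
    (x : n → ℝ) ⬝ᵥ A *ᵥ (y : n → ℝ) = ⟪x, mvE A y⟫ := by
  rw [euc_inner]
  exact Finset.sum_congr rfl fun i _ => by rw [mvE_apply]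

lemma toEucLin_basis (i : n) :
    Matrix.toEuclideanLin M (hM.eigenvectorBasis i) =
      hM.eigenvalues i • hM.eigenvectorBasis i := by
  ext j
  have h := congrFun (hM.mulVec_eigenvectorBasis i) j
  rw [toEucLin_apply']
  simpa using h

lemma inner_basis_mvE (i : n) (y : EuclideanSpace ℝ n) :
    ⟪hM.eigenvectorBasis i, mvE M y⟫ = hM.eigenvalues i * ⟪hM.eigenvectorBasis i, y⟫ := by
  have hsymm := (Matrix.isHermitian_iff_isSymmetric).1 hM
  have h2 := (hsymm (hM.eigenvectorBasis i) y).symm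
  rw [mvE, h2, toEucLin_basis hM i, real_inner_smul_left]

lemma parseval (y : EuclideanSpace ℝ n) :
    ∑ i, ⟪hM.eigenvectorBasis i, y⟫ ^ 2 = ‖y‖ ^ 2 := by
  have := hM.eigenvectorBasis.sum_inner_mul_inner y y
  rw [real_inner_self_eq_norm_sq] at this
  rw [← this]
  exact Finset.sum_congr rfl fun i _ => by rw [real_inner_comm y, sq]

lemma quad_eq_sum_eigen (y : EuclideanSpace ℝ n) :
    (y : n → ℝ) ⬝ᵥ M *ᵥ (y : n → ℝ) =
      ∑ i, hM.eigenvalues i * ⟪hM.eigenvectorBasis i, y⟫ ^ 2 := by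
  rw [dot_eq_inner, ← hM.eigenvectorBasis.sum_inner_mul_inner y (mvE M y)]
  refine Finset.sum_congr rfl fun i _ => ?_
  rw [inner_basis_mvE hM, real_inner_comm y, sq]
  ring

lemma eigen_ge_of_quad {a : ℝ} (h : ∀ x : n → ℝ, a * ∑ i, x i ^ 2 ≤ x ⬝ᵥ M *ᵥ x) (i : n) :
    a ≤ hM.eigenvalues i := by
  have hb : ‖hM.eigenvectorBasis i‖ = 1 := hM.eigenvectorBasis.orthonormal.1 i
  have h1 : ∑ j, (hM.eigenvectorBasis i : n → ℝ) j ^ 2 = 1 := by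
    rw [← euc_norm_sq, hb]; norm_num
  have h2 := h (hM.eigenvectorBasis i)
  rw [h1, mul_one, dot_eq_inner, inner_basis_mvE hM, real_inner_self_eq_norm_sq, hb] at h2
  simpa using h2

lemma quad_ge_of_eigen {a : ℝ} (h : ∀ i, a ≤ hM.eigenvalues i) (x : EuclideanSpace ℝ n) :
    a * ∑ i, x i ^ 2 ≤ (x : n → ℝ) ⬝ᵥ M *ᵥ (x : n → ℝ) := by
  rw [quad_eq_sum_eigen hM x, ← euc_norm_sq x, ← parseval hM x, Finset.mul_sum]
  exact Finset.sum_le_sum fun i _ => mul_le_mul_of_nonneg_right (h i) (sq_nonneg _)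

lemma norm_mvE_sq (x : EuclideanSpace ℝ n) :
    ‖mvE M x‖ ^ 2 = ∑ i, (hM.eigenvalues i * ⟪hM.eigenvectorBasis i, x⟫) ^ 2 := by
  rw [← parseval hM (mvE M x)]
  exact Finset.sum_congr rfl fun i _ => by rw [inner_basis_mvE hM]

lemma specNorm_le_of_eigen_abs {r : ℝ} (hr : 0 ≤ r) (h : ∀ i, |hM.eigenvalues i| ≤ r) :
    specNorm M ≤ r := by
  refine specNorm_le_bound M r hr fun x => ?_
  have h2 : ‖mvE M x‖ ^ 2 ≤ (r * ‖x‖) ^ 2 := by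
    rw [norm_mvE_sq hM, mul_pow, ← parseval hM x, Finset.mul_sum]
    refine Finset.sum_le_sum fun i _ => ?_
    rw [mul_pow]
    have : hM.eigenvalues i ^ 2 ≤ r ^ 2 := sq_le_sq' (abs_le.1 (h i)).1 (abs_le.1 (h i)).2
    exact mul_le_mul_of_nonneg_right this (sq_nonneg _)
  have := Real.sqrt_le_sqrt h2
  rwa [Real.sqrt_sq (norm_nonneg _), Real.sqrt_sq (by positivity)] at this

lemma norm_mvE_ge_of_eigen {a : ℝ} (ha : 0 ≤ a) (h : ∀ i, a ≤ hM.eigenvalues i)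
    (x : EuclideanSpace ℝ n) : a * ‖x‖ ≤ ‖mvE M x‖ := by
  have h2 : (a * ‖x‖) ^ 2 ≤ ‖mvE M x‖ ^ 2 := by
    rw [norm_mvE_sq hM, mul_pow, ← parseval hM x, Finset.mul_sum]
    refine Finset.sum_le_sum fun i _ => ?_
    rw [mul_pow]
    exact mul_le_mul_of_nonneg_right
      (pow_le_pow_left₀ ha (h i) 2) (sq_nonneg _)
  have := Real.sqrt_le_sqrt h2
  rwa [Real.sqrt_sq (by positivity), Real.sqrt_sq (norm_nonneg _)] at this

end spectral

section more
variable {n : Type*} [Fintype n] [DecidableEq n]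

lemma isHermitian_of_isSymm {M : Matrix n n ℝ} (h : M.IsSymm) : M.IsHermitian := by
  rwa [Matrix.IsHermitian, Matrix.conjTranspose_eq_transpose_of_trivial]

lemma transpose_eq_of_isHermitian {M : Matrix n n ℝ} (h : M.IsHermitian) : Mᵀ = M := by
  rwa [Matrix.IsHermitian, Matrix.conjTranspose_eq_transpose_of_trivial] at h

lemma dot_mulVec_symm {M : Matrix n n ℝ} (hM : M.IsHermitian) (v w : n → ℝ) :
    v ⬝ᵥ M *ᵥ w = (M *ᵥ v) ⬝ᵥ w := by
  rw [Matrix.dotProduct_mulVec, ← transpose_eq_of_isHermitian hM, Matrix.vecMul_transpose,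
    transpose_eq_of_isHermitian hM]

lemma abs_dot_le (A : Matrix n n ℝ) (x : EuclideanSpace ℝ n) :
    |(x : n → ℝ) ⬝ᵥ A *ᵥ (x : n → ℝ)| ≤ specNorm A * ∑ i, x i ^ 2 := by
  rw [dot_eq_inner x x A, ← euc_norm_sq]
  have h1 := abs_real_inner_le_norm x (mvE A x)
  have h2 := norm_mvE_le A x
  have h3 : (0:ℝ) ≤ ‖x‖ := norm_nonneg _
  nlinarith [specNorm_nonneg A]

lemma sum_sq_pos_of_ne_zero {x : n → ℝ} (hx : x ≠ 0) : 0 < ∑ i, x i ^ 2 := by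
  rcases Function.ne_iff.1 hx with ⟨i, hi⟩
  have : 0 < x i ^ 2 := sq_pos_iff.2 hi
  calc 0 < x i ^ 2 := this
    _ ≤ ∑ j, x j ^ 2 :=
      Finset.single_le_sum (fun j _ => sq_nonneg (x j)) (Finset.mem_univ i)

lemma posSemidef_of_lowEv {M : Matrix n n ℝ} (hM : M.IsHermitian) {a : ℝ} (ha : 0 ≤ a)
    (h : ∀ x : n → ℝ, a * ∑ i, x i ^ 2 ≤ x ⬝ᵥ M *ᵥ x) : M.PosSemidef := by
  refine posSemidef_iff_dotProduct_mulVec.2 ⟨hM, fun x => ?_⟩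
  rw [star_trivial]
  have h0 : (0:ℝ) ≤ a * ∑ i, x i ^ 2 := by positivity
  exact h0.trans (h x)

lemma posDef_of_lowEv {M : Matrix n n ℝ} (hM : M.IsHermitian) {a : ℝ} (ha : 0 < a)
    (h : ∀ x : n → ℝ, a * ∑ i, x i ^ 2 ≤ x ⬝ᵥ M *ᵥ x) : M.PosDef := by
  refine posDef_iff_dotProduct_mulVec.2 ⟨hM, fun x hx => ?_⟩
  rw [star_trivial]
  have h0 : (0:ℝ) < a * ∑ i, x i ^ 2 := mul_pos ha (sum_sq_pos_of_ne_zero hx)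
  exact h0.trans_le (h x)

end more

section sqrtsec
variable {n : Type*} [Fintype n] [DecidableEq n]

lemma msqrt_eq {A : Matrix n n ℝ} (hA : A.PosSemidef) : msqrt A =
    (hA.1.eigenvectorUnitary : Matrix n n ℝ) * diagonal ((↑) ∘ (√·) ∘ hA.1.eigenvalues) *
      (star hA.1.eigenvectorUnitary : Matrix n n ℝ) := dif_pos hA

lemma msqrt_posSemidef {A : Matrix n n ℝ} (hA : A.PosSemidef) : (msqrt A).PosSemidef := by
  rw [msqrt_eq hA, star_eq_conjTranspose]
  refine PosSemidef.mul_mul_conjTranspose_same (PosSemidef.diagonal fun i => ?_) _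
  simp [Real.sqrt_nonneg]

lemma msqrt_mul_self {A : Matrix n n ℝ} (hA : A.PosSemidef) : msqrt A * msqrt A = A := by
  rw [msqrt_eq hA]
  conv_rhs => rw [hA.1.spectral_theorem, Unitary.conjStarAlgAut_apply]
  have hU : (star hA.1.eigenvectorUnitary : Matrix n n ℝ) *
      (hA.1.eigenvectorUnitary : Matrix n n ℝ) = 1 :=
    Unitary.coe_star_mul_self _
  have hD : diagonal ((↑) ∘ (√·) ∘ hA.1.eigenvalues) * diagonal ((↑) ∘ (√·) ∘ hA.1.eigenvalues)
      = diagonal (RCLike.ofReal ∘ hA.1.eigenvalues : n → ℝ) := by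
    rw [diagonal_mul_diagonal]; congr 1; funext i
    simp [Real.mul_self_sqrt (hA.eigenvalues_nonneg i)]
  calc _ = (hA.1.eigenvectorUnitary : Matrix n n ℝ) *
      (diagonal ((↑) ∘ (√·) ∘ hA.1.eigenvalues) *
      ((star hA.1.eigenvectorUnitary : Matrix n n ℝ) * (hA.1.eigenvectorUnitary : Matrix n n ℝ)) *
      diagonal ((↑) ∘ (√·) ∘ hA.1.eigenvalues)) * (star hA.1.eigenvectorUnitary : Matrix n n ℝ) := by
        simp only [Matrix.mul_assoc]
    _ = _ := by rw [hU, Matrix.mul_one, hD]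

lemma msqrt_eigen_ge {A : Matrix n n ℝ} (hA : A.PosSemidef) {c : ℝ} (hc : 0 ≤ c)
    (h : ∀ x : n → ℝ, c * ∑ i, x i ^ 2 ≤ x ⬝ᵥ A *ᵥ x)
    (hN : (msqrt A).IsHermitian) (i : n) : Real.sqrt c ≤ hN.eigenvalues i := by
  have hν : 0 ≤ hN.eigenvalues i := by
    have := (msqrt_posSemidef hA).eigenvalues_nonneg i
    exact this
  set v : EuclideanSpace ℝ n := hN.eigenvectorBasis i with hv
  have hb1 : ‖v‖ = 1 := hN.eigenvectorBasis.orthonormal.1 i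
  have hsum : ∑ j, v j ^ 2 = 1 := by rw [← euc_norm_sq, hb1]; norm_num
  have hmv : msqrt A *ᵥ (v : n → ℝ) = hN.eigenvalues i • (v : n → ℝ) :=
    hN.mulVec_eigenvectorBasis i
  have hAv : A *ᵥ (v : n → ℝ) = (hN.eigenvalues i * hN.eigenvalues i) • (v : n → ℝ) := by
    have h2 : (msqrt A * msqrt A) *ᵥ (v : n → ℝ) =
        (hN.eigenvalues i * hN.eigenvalues i) • (v : n → ℝ) := by
      rw [← Matrix.mulVec_mulVec, hmv, Matrix.mulVec_smul, hmv, smul_smul]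
    rwa [msqrt_mul_self hA] at h2
  have hquad : (v : n → ℝ) ⬝ᵥ A *ᵥ (v : n → ℝ) = hN.eigenvalues i * hN.eigenvalues i := by
    rw [hAv, dotProduct_smul, smul_eq_mul]
    have : (v : n → ℝ) ⬝ᵥ (v : n → ℝ) = ∑ j, v j ^ 2 := by
      simp [dotProduct, sq]
    rw [this, hsum, mul_one]
  have h2 := h v
  rw [hsum, mul_one, hquad] at h2
  calc Real.sqrt c ≤ Real.sqrt (hN.eigenvalues i * hN.eigenvalues i) := Real.sqrt_le_sqrt h2
    _ = hN.eigenvalues i := by rw [← sq, Real.sqrt_sq hν]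

lemma msqrt_lowEv {A : Matrix n n ℝ} (hA : A.PosSemidef) {c : ℝ} (hc : 0 ≤ c)
    (h : ∀ x : n → ℝ, c * ∑ i, x i ^ 2 ≤ x ⬝ᵥ A *ᵥ x) (x : n → ℝ) :
    Real.sqrt c * ∑ i, x i ^ 2 ≤ x ⬝ᵥ msqrt A *ᵥ x :=
  quad_ge_of_eigen (msqrt_posSemidef hA).1 (msqrt_eigen_ge hA hc h (msqrt_posSemidef hA).1) (WithLp.toLp 2 x)

/-- Lipschitz bound for differences with controlled squares. -/
lemma sqrt_lip {P Q : Matrix n n ℝ} (hP : P.IsHermitian) (hQ : Q.IsHermitian) {a : ℝ}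
    (ha : 0 < a)
    (hPa : ∀ x : n → ℝ, a * ∑ i, x i ^ 2 ≤ x ⬝ᵥ P *ᵥ x)
    (hQa : ∀ x : n → ℝ, a * ∑ i, x i ^ 2 ≤ x ⬝ᵥ Q *ᵥ x) :
    specNorm (P - Q) ≤ specNorm (P * P - Q * Q) / (2 * a) := by
  have hX : (P - Q).IsHermitian := hP.sub hQ
  refine specNorm_le_of_eigen_abs hX (div_nonneg (specNorm_nonneg _) (by positivity)) fun i => ?_
  set μ := hX.eigenvalues i with hμ
  set v : EuclideanSpace ℝ n := hX.eigenvectorBasis i with hv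
  have hb1 : ‖v‖ = 1 := hX.eigenvectorBasis.orthonormal.1 i
  have hsum : ∑ j, v j ^ 2 = 1 := by rw [← euc_norm_sq, hb1]; norm_num
  have hmv : (P - Q) *ᵥ (v : n → ℝ) = μ • (v : n → ℝ) := hX.mulVec_eigenvectorBasis i
  have key : (v : n → ℝ) ⬝ᵥ (P * P - Q * Q) *ᵥ (v : n → ℝ) =
      μ * ((v : n → ℝ) ⬝ᵥ P *ᵥ (v : n → ℝ) + (v : n → ℝ) ⬝ᵥ Q *ᵥ (v : n → ℝ)) := by
    have hd : P * P - Q * Q = P * (P - Q) + (P - Q) * Q := by noncomm_ring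
    have t1 : (v : n → ℝ) ⬝ᵥ (P * (P - Q)) *ᵥ (v : n → ℝ) =
        μ * ((v : n → ℝ) ⬝ᵥ P *ᵥ (v : n → ℝ)) := by
      rw [← Matrix.mulVec_mulVec, hmv, Matrix.mulVec_smul, dotProduct_smul, smul_eq_mul]
    have t2 : (v : n → ℝ) ⬝ᵥ ((P - Q) * Q) *ᵥ (v : n → ℝ) =
        μ * ((v : n → ℝ) ⬝ᵥ Q *ᵥ (v : n → ℝ)) := by
      rw [← Matrix.mulVec_mulVec, dot_mulVec_symm hX, hmv, smul_dotProduct, smul_eq_mul]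
    rw [hd, Matrix.add_mulVec, dotProduct_add, t1, t2]
    ring
  have hub := abs_dot_le (P * P - Q * Q) v
  rw [hsum, mul_one] at hub
  have hlb : 2 * a ≤ (v : n → ℝ) ⬝ᵥ P *ᵥ (v : n → ℝ) + (v : n → ℝ) ⬝ᵥ Q *ᵥ (v : n → ℝ) := by
    have h1 := hPa v; have h2 := hQa v
    rw [hsum, mul_one] at h1 h2
    linarith
  have habs : |μ| * (2 * a) ≤ specNorm (P * P - Q * Q) := by
    calc |μ| * (2 * a) ≤ |μ| * ((v : n → ℝ) ⬝ᵥ P *ᵥ (v : n → ℝ) +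
          (v : n → ℝ) ⬝ᵥ Q *ᵥ (v : n → ℝ)) :=
        mul_le_mul_of_nonneg_left hlb (abs_nonneg μ)
      _ = |(v : n → ℝ) ⬝ᵥ (P * P - Q * Q) *ᵥ (v : n → ℝ)| := by
        rw [key, abs_mul]
        congr 1
        exact (abs_of_nonneg (by linarith [hlb, ha.le] : (0:ℝ) ≤ _)).symm
      _ ≤ specNorm (P * P - Q * Q) := hub
  rw [le_div_iff₀ (by positivity)]
  exact habs

end sqrtsec

section invsec
variable {n : Type*} [Fintype n] [DecidableEq n]

lemma sum_sq_mulVec_le (M : Matrix n n ℝ) (x : EuclideanSpace ℝ n) :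
    ∑ i, (M *ᵥ (x : n → ℝ)) i ^ 2 ≤ specNorm M ^ 2 * ∑ i, x i ^ 2 := by
  calc ∑ i, (M *ᵥ (x : n → ℝ)) i ^ 2 = ‖mvE M x‖ ^ 2 := sum_sq_mvE M x
    _ ≤ (specNorm M * ‖x‖) ^ 2 := pow_le_pow_left₀ (norm_nonneg _) (norm_mvE_le M x) 2
    _ = specNorm M ^ 2 * ‖x‖ ^ 2 := by rw [mul_pow]
    _ = specNorm M ^ 2 * ∑ i, x i ^ 2 := by rw [euc_norm_sq]

lemma specNorm_inv_le {Q : Matrix n n ℝ} (hQ : Q.PosDef) {a : ℝ} (ha : 0 < a)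
    (h : ∀ i, a ≤ hQ.1.eigenvalues i) : specNorm Q⁻¹ ≤ a⁻¹ := by
  have hdet : IsUnit Q.det := isUnit_iff_ne_zero.2 hQ.det_pos.ne'
  refine specNorm_le_bound Q⁻¹ a⁻¹ (by positivity) fun y => ?_
  set x : EuclideanSpace ℝ n := mvE Q⁻¹ y with hx
  have hxy : (x : n → ℝ) = Q⁻¹ *ᵥ (y : n → ℝ) := funext fun k => mvE_apply Q⁻¹ y k
  have hQx : mvE Q x = y := by
    ext j
    rw [mvE_apply, hxy, Matrix.mulVec_mulVec, Matrix.mul_nonsing_inv Q hdet,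
      Matrix.one_mulVec]
  have hge := norm_mvE_ge_of_eigen hQ.1 ha.le h x
  rw [hQx] at hge
  calc ‖mvE Q⁻¹ y‖ = ‖x‖ := rfl
    _ ≤ a⁻¹ * ‖y‖ := by
        rw [inv_mul_eq_div, le_div_iff₀ ha]
        linarith

end invsec

section subm
variable {n : Type*} [Fintype n] [DecidableEq n] (S : Finset n)

def extS (y : {j // j ∈ S} → ℝ) : n → ℝ := fun i => if h : i ∈ S then y ⟨i, h⟩ else 0

lemma sum_ext_mul (y : {j // j ∈ S} → ℝ) (g : n → ℝ) :
    ∑ i, g i * extS S y i = ∑ j : {j // j ∈ S}, g (j : n) * y j := by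
  have h1 : ∑ i, g i * extS S y i = ∑ i ∈ S, g i * extS S y i :=
    (Finset.sum_subset S.subset_univ (fun i _ hi => by simp [extS, hi])).symm
  rw [h1, ← Finset.sum_coe_sort S (fun i => g i * extS S y i)]
  refine Finset.sum_congr rfl fun j _ => ?_
  simp [extS, j.2]

lemma sum_sq_ext (y : {j // j ∈ S} → ℝ) :
    ∑ i, extS S y i ^ 2 = ∑ j, y j ^ 2 := by
  have := sum_ext_mul S y (extS S y)
  simp only [sq]
  rw [this]
  refine Finset.sum_congr rfl fun j _ => ?_
  simp [extS, j.2]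

lemma mulVec_submatrix (M : Matrix n n ℝ) (y : {j // j ∈ S} → ℝ) (j : {j // j ∈ S}) :
    ((M.submatrix (Subtype.val) (Subtype.val)) *ᵥ y) j = (M *ᵥ extS S y) (j : n) := by
  simp only [Matrix.mulVec, dotProduct, Matrix.submatrix_apply]
  rw [show ∑ i, M (j : n) i * extS S y i = _ from sum_ext_mul S y (fun i => M (j : n) i)]

lemma dot_submatrix (M : Matrix n n ℝ) (y : {j // j ∈ S} → ℝ) :
    y ⬝ᵥ (M.submatrix (Subtype.val) (Subtype.val)) *ᵥ y = extS S y ⬝ᵥ M *ᵥ extS S y := by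
  simp only [dotProduct]
  have h1 : ∑ i, extS S y i * (M *ᵥ extS S y) i = ∑ i, (M *ᵥ extS S y) i * extS S y i := by
    refine Finset.sum_congr rfl fun i _ => mul_comm _ _
  rw [h1, sum_ext_mul S y (fun i => (M *ᵥ extS S y) i)]
  refine Finset.sum_congr rfl fun j _ => ?_
  rw [mulVec_submatrix S M y j, mul_comm]

lemma specNorm_submatrix_le (M : Matrix n n ℝ) :
    specNorm (n := {j // j ∈ S}) (m := {j // j ∈ S})
      (M.submatrix Subtype.val Subtype.val) ≤ specNorm M := by
  have key : ∀ y : {j // j ∈ S} → ℝ,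
      ∑ j, ((M.submatrix (Subtype.val : {j // j ∈ S} → n) Subtype.val) *ᵥ y) j ^ 2
        ≤ specNorm M ^ 2 * ∑ j, y j ^ 2 := by
    intro y
    have h1 : ∀ j : {j // j ∈ S}, ((M.submatrix Subtype.val Subtype.val) *ᵥ y) j ^ 2
        = (M *ᵥ extS S y) (j : n) ^ 2 := fun j => by rw [mulVec_submatrix]
    calc ∑ j : {j // j ∈ S}, ((M.submatrix Subtype.val Subtype.val) *ᵥ y) j ^ 2
        = ∑ j : {j // j ∈ S}, (M *ᵥ extS S y) (j : n) ^ 2 :=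
          Finset.sum_congr rfl fun j _ => h1 j
      _ = ∑ i ∈ S, (M *ᵥ extS S y) i ^ 2 := Finset.sum_coe_sort S (fun i => (M *ᵥ extS S y) i ^ 2)
      _ ≤ ∑ i, (M *ᵥ extS S y) i ^ 2 :=
          Finset.sum_le_sum_of_subset_of_nonneg S.subset_univ
            (fun i _ _ => sq_nonneg _)
      _ ≤ specNorm M ^ 2 * ∑ i, extS S y i ^ 2 := sum_sq_mulVec_le M (WithLp.toLp 2 (extS S y))
      _ = specNorm M ^ 2 * ∑ j, y j ^ 2 := by rw [sum_sq_ext]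
  exact specNorm_le_bound' _ _ (specNorm_nonneg M) key

lemma isHermitian_submatrix {M : Matrix n n ℝ} (hM : M.IsHermitian) :
    (M.submatrix (Subtype.val : {j // j ∈ S} → n) Subtype.val).IsHermitian :=
  hM.submatrix _

end subm

section rayleigh
variable {n : Type*} [Fintype n] [DecidableEq n]

lemma rayleigh_abs_le {M : Matrix n n ℝ} {r : ℝ}
    (hr : r ∈ {r | ∃ x : n → ℝ, ∑ i, (x i) ^ 2 = 1 ∧ r = x ⬝ᵥ M.mulVec x}) :
    |r| ≤ specNorm M := by
  obtain ⟨x, hx1, rfl⟩ := hr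
  have : |x ⬝ᵥ M *ᵥ x| ≤ specNorm M * ∑ i, x i ^ 2 := abs_dot_le M (WithLp.toLp 2 x)
  rwa [hx1, mul_one] at this

lemma rayleigh_bddBelow (M : Matrix n n ℝ) :
    BddBelow {r | ∃ x : n → ℝ, ∑ i, (x i) ^ 2 = 1 ∧ r = x ⬝ᵥ M.mulVec x} :=
  ⟨-specNorm M, fun r hr => neg_le_of_abs_le (rayleigh_abs_le hr)⟩

lemma rayleigh_bddAbove (M : Matrix n n ℝ) :
    BddAbove {r | ∃ x : n → ℝ, ∑ i, (x i) ^ 2 = 1 ∧ r = x ⬝ᵥ M.mulVec x} :=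
  ⟨specNorm M, fun r hr => le_of_abs_le (rayleigh_abs_le hr)⟩

lemma lowEv_of_le_lambdaMin {M : Matrix n n ℝ} {c : ℝ} (h : c ≤ lambdaMin M)
    (x : n → ℝ) : c * ∑ i, x i ^ 2 ≤ x ⬝ᵥ M *ᵥ x := by
  rcases eq_or_lt_of_le (Finset.sum_nonneg fun i _ => sq_nonneg (x i)) with h0 | h0
  · have hx : x = 0 := by
      funext i
      have := (Finset.sum_eq_zero_iff_of_nonneg (fun i _ => sq_nonneg (x i))).1 h0.symm i
        (Finset.mem_univ i)
      exact pow_eq_zero_iff (n := 2) (by norm_num) |>.1 this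
    rw [hx]
    simp
  · set t := ∑ i, x i ^ 2 with ht
    set u : n → ℝ := (Real.sqrt t)⁻¹ • x with hu
    have hst : Real.sqrt t ^ 2 = t := Real.sq_sqrt h0.le
    have hst0 : Real.sqrt t ≠ 0 := by
      intro hcon
      rw [hcon] at hst
      simp at hst
      exact absurd hst.symm h0.ne'
    have hu1 : ∑ i, u i ^ 2 = 1 := by
      have : ∀ i, u i ^ 2 = t⁻¹ * x i ^ 2 := fun i => by
        simp only [hu, Pi.smul_apply, smul_eq_mul, mul_pow]
        rw [inv_pow, hst]
      rw [Finset.sum_congr rfl fun i _ => this i, ← Finset.mul_sum, ← ht,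
        inv_mul_cancel₀ h0.ne']
    have hudot : u ⬝ᵥ M *ᵥ u = t⁻¹ * (x ⬝ᵥ M *ᵥ x) := by
      rw [hu, smul_dotProduct, Matrix.mulVec_smul, dotProduct_smul]
      simp only [smul_eq_mul]
      rw [← mul_assoc, show (Real.sqrt t)⁻¹ * (Real.sqrt t)⁻¹ = ((Real.sqrt t) ^ 2)⁻¹ by
        rw [sq, mul_inv], hst]
    have hmem : u ⬝ᵥ M *ᵥ u ∈
        {r | ∃ y : n → ℝ, ∑ i, (y i) ^ 2 = 1 ∧ r = y ⬝ᵥ M.mulVec y} := ⟨u, hu1, rfl⟩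
    have h2 : c ≤ u ⬝ᵥ M *ᵥ u := h.trans (csInf_le (rayleigh_bddBelow M) hmem)
    rw [hudot] at h2
    calc c * t ≤ (t⁻¹ * (x ⬝ᵥ M *ᵥ x)) * t := mul_le_mul_of_nonneg_right h2 h0.le
      _ = x ⬝ᵥ M *ᵥ x := by field_simp

lemma single_sum_sq (j : n) : ∑ i, (Pi.single j 1 : n → ℝ) i ^ 2 = 1 := by
  simp [Pi.single_apply, sq, Finset.sum_ite_eq']

lemma single_quad (M : Matrix n n ℝ) (j : n) :
    (Pi.single j 1 : n → ℝ) ⬝ᵥ M *ᵥ (Pi.single j 1 : n → ℝ) = M j j := by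
  simp [dotProduct, Matrix.mulVec, Pi.single_apply, mul_ite, ite_mul,
    Finset.sum_ite_eq', Finset.sum_ite_eq]

lemma diag_le_of_lambdaMax {M : Matrix n n ℝ} {c : ℝ} (h : lambdaMax M ≤ c) (j : n) :
    M j j ≤ c := by
  have hmem : M j j ∈ {r | ∃ x : n → ℝ, ∑ i, (x i) ^ 2 = 1 ∧ r = x ⬝ᵥ M.mulVec x} :=
    ⟨Pi.single j 1, single_sum_sq j, (single_quad M j).symm⟩
  exact (le_csSup (rayleigh_bddAbove M) hmem).trans h

lemma specNorm_diag_le {s : n → ℝ} {b : ℝ} (hb : 0 ≤ b) (h0 : ∀ j, 0 ≤ s j)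
    (h1 : ∀ j, s j ≤ b) : specNorm (Matrix.diagonal s) ≤ b := by
  refine specNorm_le_bound' _ b hb fun x => ?_
  have hmv : ∀ i, (Matrix.diagonal s *ᵥ x) i = s i * x i := fun i =>
    Matrix.mulVec_diagonal s x i
  calc ∑ i, (Matrix.diagonal s *ᵥ x) i ^ 2 = ∑ i, (s i * x i) ^ 2 :=
      Finset.sum_congr rfl fun i _ => by rw [hmv]
    _ ≤ ∑ i, b ^ 2 * x i ^ 2 := Finset.sum_le_sum fun i _ => by
        rw [mul_pow]
        exact mul_le_mul_of_nonneg_right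
          (pow_le_pow_left₀ (h0 i) (h1 i) 2) (sq_nonneg _)
    _ = b ^ 2 * ∑ i, x i ^ 2 := by rw [Finset.mul_sum]

lemma specNorm_mul_le {l : Type*} [Fintype l] [DecidableEq l] {m : Type*} [Fintype m]
    [DecidableEq m] (X : Matrix m n ℝ) (Y : Matrix n l ℝ) :
    specNorm (X * Y) ≤ specNorm X * specNorm Y := by
  rw [specNorm_eq, specNorm_eq, specNorm_eq]
  exact Matrix.l2_opNorm_mul X Y

lemma specNorm_sub_rev (X Y : Matrix n n ℝ) : specNorm (X - Y) = specNorm (Y - X) := by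
  rw [specNorm_eq, specNorm_eq]
  exact norm_sub_rev X Y

lemma herm_affine {Om : Matrix n n ℝ} (hOm : Om.IsSymm) (s : n → ℝ) :
    ((2 : ℝ) • Matrix.diagonal s - Matrix.diagonal s * Om * Matrix.diagonal s).IsHermitian := by
  apply isHermitian_of_isSymm
  unfold Matrix.IsSymm
  rw [Matrix.transpose_sub, Matrix.transpose_smul, Matrix.diagonal_transpose,
    Matrix.transpose_mul, Matrix.transpose_mul, Matrix.diagonal_transpose, hOm,
    Matrix.mul_assoc]

end rayleigh

lemma colSub_t_mul {m p : Type*} [Fintype m] [DecidableEq p] (A : Matrix m p ℝ)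
    (S : Finset p) :
    (colSub A S)ᵀ * colSub A S = (Aᵀ * A).submatrix Subtype.val Subtype.val := by
  ext i j
  simp [colSub, Matrix.mul_apply, Matrix.transpose_apply]

lemma BtB_eq {n : Type*} [Fintype n] [DecidableEq n] {A : Matrix n n ℝ}
    (hA : A.PosSemidef) : (msqrt A)ᵀ * msqrt A = A := by
  have h1 : (msqrt A)ᵀ = msqrt A := transpose_eq_of_isHermitian (msqrt_posSemidef hA).1
  rw [h1, msqrt_mul_self hA]

/-- Lemma 1 of the paper, Lipschitz bound for `B̃(Ω,S) - I`. -/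
theorem stmt_0 :
    ∀ c₀ : ℝ, 0 < c₀ →
      ∃ c₁ > (0 : ℝ), ∃ δ > (0 : ℝ),
        ∀ (p : ℕ), 0 < p →
          ∀ (Om₀ Om : Matrix (Fin p) (Fin p) ℝ) (s : Fin p → ℝ),
            Om₀.IsSymm → Om₀.PosDef → Om.IsSymm → Om.PosDef →
            (∀ j, 0 ≤ s j) →
            (Om₀⁻¹ - (1 / 2 : ℝ) • Matrix.diagonal s).PosSemidef →
            c₀ ≤ lambdaMin
                ((2 : ℝ) • Matrix.diagonal s - Matrix.diagonal s * Om₀ * Matrix.diagonal s) →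
            lambdaMax (Om₀⁻¹) ≤ c₀⁻¹ →
            specNorm (Om - Om₀) ≤ δ →
            ((2 : ℝ) • Matrix.diagonal s -
                Matrix.diagonal s * Om * Matrix.diagonal s).PosDef ∧
            (∀ S : Finset (Fin p),
              ((colSub (Bmat s Om₀) S)ᵀ * colSub (Bmat s Om₀) S).PosDef) ∧
            (∀ S : Finset (Fin p),
              specNorm (Btilde s Om₀ Om S - 1) ≤ c₁ * specNorm (Om - Om₀)) := by
  intro c₀ hc₀
  refine ⟨(Real.sqrt c₀)⁻¹ * ((2 / c₀) ^ 2 / (2 * Real.sqrt (c₀ / 2))), by positivity,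
    c₀ ^ 3 / 8, by positivity, ?_⟩
  intro p hp Om₀ Om s hOm₀s hOm₀pd hOms hOmpd hs hpsd hmin hmax hnear
  set D := Matrix.diagonal s with hDdef
  set A₀ := (2 : ℝ) • D - D * Om₀ * D with hA₀def
  set A := (2 : ℝ) • D - D * Om * D with hAdef
  set ε := specNorm (Om - Om₀) with hεdef
  have hεnn : 0 ≤ ε := specNorm_nonneg _
  have hermA₀ : A₀.IsHermitian := herm_affine hOm₀s s
  have hermA : A.IsHermitian := herm_affine hOms s
  have hlow₀ : ∀ x : Fin p → ℝ, c₀ * ∑ i, x i ^ 2 ≤ x ⬝ᵥ A₀ *ᵥ x :=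
    fun x => lowEv_of_le_lambdaMin hmin x
  have hsb : ∀ j, s j ≤ 2 / c₀ := by
    intro j
    have h1 : Om₀⁻¹ j j ≤ c₀⁻¹ := diag_le_of_lambdaMax hmax j
    have h2 := hpsd.dotProduct_mulVec_nonneg (Pi.single j 1)
    rw [star_trivial] at h2
    have h3 : (Pi.single j 1 : Fin p → ℝ) ⬝ᵥ (Om₀⁻¹ - (1 / 2 : ℝ) • Matrix.diagonal s) *ᵥ
        (Pi.single j 1) = Om₀⁻¹ j j - (1/2) * s j := by
      rw [single_quad]
      simp [Matrix.diagonal_apply_eq]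
    rw [h3] at h2
    rw [div_eq_mul_inv]
    linarith
  have hDb : specNorm D ≤ 2 / c₀ := specNorm_diag_le (by positivity) hs hsb
  have hdiff : A - A₀ = D * (Om₀ - Om) * D := by
    rw [hAdef, hA₀def, Matrix.mul_sub, Matrix.sub_mul]
    abel
  have hAA₀ : specNorm (A - A₀) ≤ (2 / c₀) ^ 2 * ε := by
    rw [hdiff]
    have h1 : specNorm (D * (Om₀ - Om) * D) ≤ specNorm (D * (Om₀ - Om)) * specNorm D :=
      specNorm_mul_le _ _
    have h2 : specNorm (D * (Om₀ - Om)) ≤ specNorm D * specNorm (Om₀ - Om) :=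
      specNorm_mul_le _ _
    have h3 : specNorm (Om₀ - Om) = ε := specNorm_sub_rev _ _
    calc specNorm (D * (Om₀ - Om) * D) ≤ specNorm (D * (Om₀ - Om)) * specNorm D := h1
      _ ≤ (specNorm D * specNorm (Om₀ - Om)) * specNorm D :=
          mul_le_mul_of_nonneg_right h2 (specNorm_nonneg D)
      _ = specNorm D * specNorm D * ε := by rw [h3]; ring
      _ ≤ (2 / c₀) * (2 / c₀) * ε := by
          have h4 : specNorm D * specNorm D ≤ (2 / c₀) * (2 / c₀) :=
            mul_le_mul hDb hDb (specNorm_nonneg D) (by positivity)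
          exact mul_le_mul_of_nonneg_right h4 hεnn
      _ = (2 / c₀) ^ 2 * ε := by ring
  have hhalf : (2 / c₀) ^ 2 * ε ≤ c₀ / 2 := by
    calc (2 / c₀) ^ 2 * ε ≤ (2 / c₀) ^ 2 * (c₀ ^ 3 / 8) :=
        mul_le_mul_of_nonneg_left hnear (by positivity)
      _ = c₀ / 2 := by field_simp; ring
  have hlowA : ∀ x : Fin p → ℝ, c₀ / 2 * ∑ i, x i ^ 2 ≤ x ⬝ᵥ A *ᵥ x := by
    intro x
    have h1 := hlow₀ x
    have h2 : |x ⬝ᵥ (A - A₀) *ᵥ x| ≤ specNorm (A - A₀) * ∑ i, x i ^ 2 :=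
      abs_dot_le (A - A₀) (WithLp.toLp 2 x)
    have h3 : specNorm (A - A₀) * ∑ i, x i ^ 2 ≤ c₀ / 2 * ∑ i, x i ^ 2 :=
      mul_le_mul_of_nonneg_right (hAA₀.trans hhalf)
        (Finset.sum_nonneg fun i _ => sq_nonneg _)
    have h4 : x ⬝ᵥ A₀ *ᵥ x + x ⬝ᵥ (A - A₀) *ᵥ x = x ⬝ᵥ A *ᵥ x := by
      rw [← dotProduct_add, ← Matrix.add_mulVec, add_sub_cancel]
    have h6 := (abs_le.1 h2).1
    linarith
  have hApd : A.PosDef := posDef_of_lowEv hermA (by positivity) hlowA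
  have hApsd : A.PosSemidef := posSemidef_of_lowEv hermA (by positivity) hlowA
  have hA₀psd : A₀.PosSemidef := posSemidef_of_lowEv hermA₀ hc₀.le hlow₀
  have hBm₀ : Bmat s Om₀ = msqrt A₀ := rfl
  have hBm : Bmat s Om = msqrt A := rfl
  have hlowS₀ : ∀ (S : Finset (Fin p)) (y : {j // j ∈ S} → ℝ),
      c₀ * ∑ j, y j ^ 2 ≤ y ⬝ᵥ (A₀.submatrix Subtype.val Subtype.val) *ᵥ y := by
    intro S y
    rw [dot_submatrix, ← sum_sq_ext S y]
    exact hlow₀ (extS S y)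
  have hlowS : ∀ (S : Finset (Fin p)) (y : {j // j ∈ S} → ℝ),
      c₀ / 2 * ∑ j, y j ^ 2 ≤ y ⬝ᵥ (A.submatrix Subtype.val Subtype.val) *ᵥ y := by
    intro S y
    rw [dot_submatrix, ← sum_sq_ext S y]
    exact hlowA (extS S y)
  refine ⟨hApd, ?_, ?_⟩
  · intro S
    rw [hBm₀, colSub_t_mul, BtB_eq hA₀psd]
    exact posDef_of_lowEv (isHermitian_submatrix S hermA₀) hc₀ (hlowS₀ S)
  · intro S
    set MS₀ := A₀.submatrix (Subtype.val : {j // j ∈ S} → Fin p) Subtype.val with hMS₀def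
    set MS := A.submatrix (Subtype.val : {j // j ∈ S} → Fin p) Subtype.val with hMSdef
    have hermS₀ : MS₀.IsHermitian := isHermitian_submatrix S hermA₀
    have hermS : MS.IsHermitian := isHermitian_submatrix S hermA
    have psdS₀ : MS₀.PosSemidef := posSemidef_of_lowEv hermS₀ hc₀.le (hlowS₀ S)
    have psdS : MS.PosSemidef := posSemidef_of_lowEv hermS (by positivity) (hlowS S)
    set Q := msqrt MS₀ with hQdef
    set P := msqrt MS with hPdef
    have hlowQ : ∀ y : {j // j ∈ S} → ℝ, Real.sqrt c₀ * ∑ j, y j ^ 2 ≤ y ⬝ᵥ Q *ᵥ y :=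
      msqrt_lowEv psdS₀ hc₀.le (hlowS₀ S)
    have hQpd : Q.PosDef :=
      posDef_of_lowEv (msqrt_posSemidef psdS₀).1 (Real.sqrt_pos.2 hc₀) hlowQ
    have hQinvQ : Q⁻¹ * Q = 1 :=
      Matrix.nonsing_inv_mul Q (isUnit_iff_ne_zero.2 hQpd.det_pos.ne')
    have hBt : Btilde s Om₀ Om S - 1 = Q⁻¹ * (P - Q) := by
      have h1 : Btilde s Om₀ Om S = Q⁻¹ * P := by
        rw [Btilde, hBm₀, hBm, colSub_t_mul, colSub_t_mul, BtB_eq hA₀psd, BtB_eq hApsd]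
      rw [h1, Matrix.mul_sub, hQinvQ]
    have ha : (0:ℝ) < Real.sqrt (c₀ / 2) := Real.sqrt_pos.2 (by positivity)
    have hlowP : ∀ y : {j // j ∈ S} → ℝ,
        Real.sqrt (c₀ / 2) * ∑ j, y j ^ 2 ≤ y ⬝ᵥ P *ᵥ y :=
      msqrt_lowEv psdS (by positivity) (hlowS S)
    have hlowQ' : ∀ y : {j // j ∈ S} → ℝ,
        Real.sqrt (c₀ / 2) * ∑ j, y j ^ 2 ≤ y ⬝ᵥ Q *ᵥ y := by
      intro y
      refine le_trans ?_ (hlowQ y)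
      exact mul_le_mul_of_nonneg_right (Real.sqrt_le_sqrt (by linarith))
        (Finset.sum_nonneg fun j _ => sq_nonneg _)
    have hPP : P * P = MS := msqrt_mul_self psdS
    have hQQ : Q * Q = MS₀ := msqrt_mul_self psdS₀
    have hlip := sqrt_lip (msqrt_posSemidef psdS).1 (msqrt_posSemidef psdS₀).1 ha hlowP hlowQ'
    rw [hPP, hQQ] at hlip
    have hsubdiff : MS - MS₀ = (A - A₀).submatrix Subtype.val Subtype.val := by
      ext i j
      simp [hMSdef, hMS₀def, Matrix.sub_apply]
    have hsn : specNorm (MS - MS₀) ≤ (2 / c₀) ^ 2 * ε := by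
      rw [hsubdiff]
      exact (specNorm_submatrix_le S _).trans hAA₀
    have hQin : specNorm Q⁻¹ ≤ (Real.sqrt c₀)⁻¹ :=
      specNorm_inv_le hQpd (Real.sqrt_pos.2 hc₀)
        (msqrt_eigen_ge psdS₀ hc₀.le (hlowS₀ S) hQpd.1)
    rw [hBt]
    calc specNorm (Q⁻¹ * (P - Q)) ≤ specNorm Q⁻¹ * specNorm (P - Q) := specNorm_mul_le _ _
      _ ≤ (Real.sqrt c₀)⁻¹ * (((2 / c₀) ^ 2 * ε) / (2 * Real.sqrt (c₀ / 2))) := by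
          have hPQ : specNorm (P - Q) ≤ ((2 / c₀) ^ 2 * ε) / (2 * Real.sqrt (c₀ / 2)) := by
            refine hlip.trans ?_
            gcongr
          exact mul_le_mul hQin hPQ (specNorm_nonneg _) (by positivity)
      _ = ((Real.sqrt c₀)⁻¹ * ((2 / c₀) ^ 2 / (2 * Real.sqrt (c₀ / 2)))) * ε := by ring

end
end

section
/- Let M ≥ 1 and C₁ > 0. Let X = (X_{ij}) be an n×p random matrix whose rows are independent and identically distributed N(0, Σ₀) random vectors in ℝ^p with Λmax(Σ₀) ≤ M, and let ε = (ε₁,…,ε_n) be independent of X with i.i.d. components satisfying P(|ε_i| > t) ≤ C₁·exp(−t²/C₁) for all t > 0. Then there exist constants c > 0 and C > 0 depending only on M and C₁ such that for all integers n ≥ 1 and p ≥ 2 with C²·log p ≤ n, P( max_{1≤j≤p} | n⁻¹ ∑_{i=1}^n ε_i X_{ij} | ≤ C·√((log p)/n) ) ≥ 1 − p^{−c}. -/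
open Matrix MeasureTheory ProbabilityTheory Finset
open scoped Classical BigOperators ENNReal NNReal

noncomputable section

/-- A random vector is centered Gaussian with covariance `V` iff every linear functional
of it is a centered real Gaussian with the corresponding variance. -/
def IsCenteredGaussian {W : Type*} [MeasurableSpace W] (μ : Measure W)
    {ι : Type*} [Fintype ι] (X : W → ι → ℝ) (V : Matrix ι ι ℝ) : Prop :=
  ∀ a : ι → ℝ, μ.map (fun ω => ∑ i, a i * X ω i) =
    ProbabilityTheory.gaussianReal 0 (Real.toNNReal (a ⬝ᵥ V.mulVec a))

lemma gauss_pdf_mul (v : ℝ≥0) (hv : v ≠ 0) (t x : ℝ) :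
    Real.exp (t * x) * gaussianPDFReal 0 v x
      = Real.exp ((v : ℝ) * t ^ 2 / 2) * gaussianPDFReal ((v : ℝ) * t) v x := by
  have hv' : (v : ℝ) ≠ 0 := by exact_mod_cast hv
  simp only [gaussianPDFReal_def]
  rw [mul_left_comm, mul_left_comm (Real.exp ((v : ℝ) * t ^ 2 / 2))]
  congr 1
  rw [← Real.exp_add, ← Real.exp_add]
  congr 1
  field_simp
  ring

lemma integrable_exp_gaussian (v : ℝ≥0) (t : ℝ) :
    Integrable (fun x => Real.exp (t * x)) (gaussianReal 0 v) := by
  by_cases hv : v = 0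
  · subst hv
    rw [gaussianReal_zero_var]
    refine (integrable_const (Real.exp (t * 0))).congr ?_
    rw [Filter.EventuallyEq, ae_dirac_eq]
    exact Filter.eventually_pure.2 rfl
  · rw [gaussianReal_of_var_ne_zero _ hv, gaussianPDF_def,
      integrable_withDensity_iff ((measurable_gaussianPDFReal 0 v).ennreal_ofReal) (ae_of_all _ fun x => ENNReal.ofReal_lt_top)]
    have : (fun x => Real.exp (t * x) * (ENNReal.ofReal (gaussianPDFReal 0 v x)).toReal)
        = fun x => Real.exp ((v : ℝ) * t ^ 2 / 2) * gaussianPDFReal ((v : ℝ) * t) v x := by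
      funext x
      rw [ENNReal.toReal_ofReal (gaussianPDFReal_nonneg 0 v x)]
      exact gauss_pdf_mul v hv t x
    rw [this]
    exact (integrable_gaussianPDFReal _ _).const_mul _

lemma integral_exp_gaussian (v : ℝ≥0) (t : ℝ) :
    ∫ x, Real.exp (t * x) ∂(gaussianReal 0 v) = Real.exp ((v : ℝ) * t ^ 2 / 2) := by
  by_cases hv : v = 0
  · subst hv
    rw [gaussianReal_zero_var, integral_dirac]
    simp
  · rw [gaussianReal_of_var_ne_zero _ hv, gaussianPDF_def]
    have hmeas : Measurable fun x => (gaussianPDFReal 0 v x).toNNReal := (measurable_gaussianPDFReal 0 v).real_toNNReal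
    have heq : (volume.withDensity fun x => ENNReal.ofReal (gaussianPDFReal 0 v x))
        = volume.withDensity fun x => ((gaussianPDFReal 0 v x).toNNReal : ℝ≥0∞) := rfl
    rw [heq, integral_withDensity_eq_integral_smul hmeas]
    have : (fun x => ((gaussianPDFReal 0 v x).toNNReal : ℝ≥0) • Real.exp (t * x))
        = fun x => Real.exp ((v : ℝ) * t ^ 2 / 2) * gaussianPDFReal ((v : ℝ) * t) v x := by
      funext x
      rw [NNReal.smul_def, smul_eq_mul, Real.coe_toNNReal _ (gaussianPDFReal_nonneg 0 v x),
        mul_comm]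
      exact gauss_pdf_mul v hv t x
    rw [this, integral_const_mul, integral_gaussianPDFReal_eq_one _ hv, mul_one]

variable {W : Type} [MeasurableSpace W] {μ : Measure W}

lemma integrable_exp_of_map_gaussian {Y : W → ℝ} (hY : Measurable Y)
    {v : ℝ≥0} (h : μ.map Y = gaussianReal 0 v) (t : ℝ) :
    Integrable (fun ω => Real.exp (t * Y ω)) μ := by
  have := integrable_exp_gaussian v t
  rw [← h] at this
  exact (integrable_map_measure ((measurable_id.const_mul t).exp.aestronglyMeasurable)
    hY.aemeasurable).mp this

lemma mgf_of_map_gaussian {Y : W → ℝ} (hY : Measurable Y)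
    {v : ℝ≥0} (h : μ.map Y = gaussianReal 0 v) (t : ℝ) :
    mgf Y μ t = Real.exp ((v : ℝ) * t ^ 2 / 2) := by
  have hmg : mgf Y μ t = ∫ x, Real.exp (t * x) ∂(μ.map Y) :=
    (integral_map hY.aemeasurable (measurable_id.const_mul t).exp.aestronglyMeasurable).symm
  rw [hmg, h, integral_exp_gaussian]

lemma map_single {n p : ℕ} {Cov : Matrix (Fin p) (Fin p) ℝ}
    {X : W → Fin n → Fin p → ℝ} {i : Fin n} (hg : IsCenteredGaussian μ (fun ω => X ω i) Cov)
    (e : Fin n → ℝ) (j : Fin p) :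
    μ.map (fun ω => e i * X ω i j)
      = gaussianReal 0 (Real.toNNReal (e i ^ 2 * Cov j j)) := by
  classical
  have h := hg (fun k => if k = j then e i else 0)
  have h1 : (fun ω => ∑ k, (if k = j then e i else 0) * X ω i k)
      = fun ω => e i * X ω i j := by
    funext ω
    simp [ite_mul, Finset.sum_ite_eq']
  have h2 : ((fun k => if k = j then e i else 0) ⬝ᵥ
      Cov.mulVec (fun k => if k = j then e i else 0)) = e i ^ 2 * Cov j j := by
    simp [dotProduct, Matrix.mulVec, ite_mul, mul_ite, mul_zero, zero_mul,
      Finset.sum_ite_eq', Finset.sum_ite_eq]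
    ring
  rw [h1, h2] at h
  exact h

lemma diag_nonneg' {p : ℕ} {Cov : Matrix (Fin p) (Fin p) ℝ} (hps : Cov.PosSemidef)
    (j : Fin p) : 0 ≤ Cov j j := by
  have h := hps.dotProduct_mulVec_nonneg (Pi.single j 1)
  simpa [dotProduct, Matrix.mulVec, Pi.single_apply, ite_mul, mul_ite,
    Finset.sum_ite_eq', Finset.sum_ite_eq] using h

lemma chernoff_col [IsProbabilityMeasure μ] {n p : ℕ} {Cov : Matrix (Fin p) (Fin p) ℝ}
    (hps : Cov.PosSemidef) {X : W → Fin n → Fin p → ℝ} (hX : Measurable X)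
    (hrows : iIndepFun (fun i ω => X ω i) μ)
    (hg : ∀ i, IsCenteredGaussian μ (fun ω => X ω i) Cov)
    (e : Fin n → ℝ) (j : Fin p) {s t : ℝ} (ht : 0 ≤ t) :
    (μ {ω | s ≤ ∑ i, e i * X ω i j}).toReal
      ≤ Real.exp (-t * s + t ^ 2 * (Cov j j * ∑ i, e i ^ 2) / 2) := by
  classical
  set Y : Fin n → W → ℝ := fun i ω => e i * X ω i j with hY
  have hYmeas : ∀ i, Measurable (Y i) := fun i =>
    ((measurable_pi_apply j).comp ((measurable_pi_apply i).comp hX)).const_mul (e i)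
  have hYindep : iIndepFun Y μ :=
    hrows.comp (fun i row => e i * row j)
      (fun i => (measurable_pi_apply (X := fun _ : Fin p => ℝ) j).const_mul (e i))
  have hlaw : ∀ i, μ.map (Y i) = gaussianReal 0 (Real.toNNReal (e i ^ 2 * Cov j j)) :=
    fun i => map_single (hg i) e j
  have hint : ∀ i, Integrable (fun ω => Real.exp (t * Y i ω)) μ :=
    fun i => integrable_exp_of_map_gaussian (hYmeas i) (hlaw i) t
  have hint_sum : Integrable (fun ω => Real.exp (t * (∑ i, Y i) ω)) μ :=
    hYindep.integrable_exp_mul_sum hYmeas (fun i _ => hint i)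
  have hset : {ω | s ≤ ∑ i, e i * X ω i j} = {ω | s ≤ (∑ i, Y i) ω} := by
    ext ω; simp [hY]
  have hch := measure_ge_le_exp_mul_mgf (X := ∑ i, Y i) (μ := μ) (t := t) s ht hint_sum
  rw [hset]
  refine hch.trans ?_
  rw [hYindep.mgf_sum hYmeas]
  have hmgf : ∀ i, mgf (Y i) μ t = Real.exp (e i ^ 2 * Cov j j * t ^ 2 / 2) := by
    intro i
    rw [mgf_of_map_gaussian (hYmeas i) (hlaw i) t]
    congr 2
    rw [Real.coe_toNNReal _ (mul_nonneg (sq_nonneg _) (diag_nonneg' hps j))]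
  rw [Finset.prod_congr rfl (fun i _ => hmgf i), ← Real.exp_sum, ← Real.exp_add]
  apply le_of_eq
  congr 1
  have : t ^ 2 * (Cov j j * ∑ i, e i ^ 2) / 2 = ∑ i, e i ^ 2 * Cov j j * t ^ 2 / 2 := by
    rw [Finset.mul_sum, Finset.mul_sum, Finset.sum_div]
    exact Finset.sum_congr rfl fun i _ => by ring
  rw [this]

lemma meas_le_ofReal {s : Set W} {b : ℝ} (hμ : μ s ≠ ⊤) (h : (μ s).toReal ≤ b) :
    μ s ≤ ENNReal.ofReal b := by
  rw [← ENNReal.ofReal_toReal hμ]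
  exact ENNReal.ofReal_le_ofReal h

lemma exp_sq_lintegral [IsProbabilityMeasure μ] {C₁ : ℝ} (hC₁ : 0 < C₁)
    {Z : W → ℝ} (hZ : Measurable Z)
    (htail : ∀ t : ℝ, 0 < t → μ {ω | t < |Z ω|} ≤ ENNReal.ofReal (C₁ * Real.exp (-(t ^ 2) / C₁))) :
    ∫⁻ ω, ENNReal.ofReal (Real.exp ((2 * C₁)⁻¹ * Z ω ^ 2)) ∂μ ≤ ENNReal.ofReal (1 + C₁) := by
  have hmeas : AEMeasurable (fun ω => Real.exp ((2 * C₁)⁻¹ * Z ω ^ 2)) μ := by fun_prop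
  rw [lintegral_eq_lintegral_meas_lt μ (ae_of_all _ fun ω => (Real.exp_pos _).le) hmeas]
  have hsplit : Set.Ioi (0 : ℝ) = Set.Ioc (0 : ℝ) 1 ∪ Set.Ioi (1 : ℝ) := by
    rw [Set.Ioc_union_Ioi_eq_Ioi zero_le_one]
  rw [hsplit, lintegral_union measurableSet_Ioi (Set.Ioc_disjoint_Ioi le_rfl)]
  have h1 : ∫⁻ t in Set.Ioc (0:ℝ) 1, μ {a | t < Real.exp ((2 * C₁)⁻¹ * Z a ^ 2)} ≤ 1 := by
    calc ∫⁻ t in Set.Ioc (0:ℝ) 1, μ {a | t < Real.exp ((2 * C₁)⁻¹ * Z a ^ 2)}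
        ≤ ∫⁻ _ in Set.Ioc (0:ℝ) 1, 1 := lintegral_mono fun t => prob_le_one
      _ = 1 := by rw [setLIntegral_one, Real.volume_Ioc]; simp
  have h2 : ∫⁻ t in Set.Ioi (1:ℝ), μ {a | t < Real.exp ((2 * C₁)⁻¹ * Z a ^ 2)}
      ≤ ENNReal.ofReal C₁ := by
    have hptwise : ∀ t ∈ Set.Ioi (1:ℝ),
        μ {a | t < Real.exp ((2 * C₁)⁻¹ * Z a ^ 2)} ≤ ENNReal.ofReal (C₁ * t ^ (-2 : ℝ)) := by
      intro t ht
      have ht1 : (1:ℝ) < t := ht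
      have hlogt : 0 < Real.log t := Real.log_pos ht1
      set u : ℝ := Real.sqrt (2 * C₁ * Real.log t) with hu
      have hu0 : 0 < u := Real.sqrt_pos.2 (by positivity)
      have husq : u ^ 2 = 2 * C₁ * Real.log t := Real.sq_sqrt (by positivity)
      have hsub : {a | t < Real.exp ((2 * C₁)⁻¹ * Z a ^ 2)} ⊆ {a | u < |Z a|} := by
        intro a ha
        simp only [Set.mem_setOf_eq] at ha ⊢
        have h' : Real.log t < (2 * C₁)⁻¹ * Z a ^ 2 := by
          have := Real.log_lt_log (by linarith) ha
          rwa [Real.log_exp] at this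
        have h2' : u ^ 2 < Z a ^ 2 := by
          rw [husq]
          have h2C : (0:ℝ) < 2 * C₁ := by positivity
          calc 2 * C₁ * Real.log t < 2 * C₁ * ((2 * C₁)⁻¹ * Z a ^ 2) := by
                exact (mul_lt_mul_iff_right₀ h2C).2 h'
            _ = Z a ^ 2 := by field_simp
        have : u ^ 2 < |Z a| ^ 2 := by rwa [sq_abs]
        exact lt_of_pow_lt_pow_left₀ 2 (abs_nonneg _) this
      refine le_trans (measure_mono hsub) (le_trans (htail u hu0) ?_)
      apply ENNReal.ofReal_le_ofReal
      have : -(u ^ 2) / C₁ = -2 * Real.log t := by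
        rw [husq]; field_simp
      rw [this]
      have : Real.exp (-2 * Real.log t) = t ^ (-2 : ℝ) := by
        rw [Real.rpow_def_of_pos (by linarith), mul_comm]
      rw [this]
    calc ∫⁻ t in Set.Ioi (1:ℝ), μ {a | t < Real.exp ((2 * C₁)⁻¹ * Z a ^ 2)}
        ≤ ∫⁻ t in Set.Ioi (1:ℝ), ENNReal.ofReal (C₁ * t ^ (-2 : ℝ)) := by
          refine setLIntegral_mono_ae ?_ ?_
          · fun_prop
          · exact ae_of_all _ hptwise
      _ = ENNReal.ofReal (∫ t in Set.Ioi (1:ℝ), C₁ * t ^ (-2 : ℝ)) := by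
          rw [← ofReal_integral_eq_lintegral_ofReal]
          · exact ((integrableOn_Ioi_rpow_of_lt (by norm_num) one_pos).const_mul C₁)
          · filter_upwards [ae_restrict_mem measurableSet_Ioi] with t ht
            have : (0:ℝ) < t := lt_trans one_pos ht
            positivity
      _ ≤ ENNReal.ofReal C₁ := by
          apply ENNReal.ofReal_le_ofReal
          rw [MeasureTheory.integral_const_mul, integral_Ioi_rpow_of_lt (by norm_num) one_pos]
          norm_num
  calc _ ≤ (1 : ℝ≥0∞) + ENNReal.ofReal C₁ := add_le_add h1 h2
    _ = ENNReal.ofReal (1 + C₁) := by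
        rw [ENNReal.ofReal_add zero_le_one hC₁.le, ENNReal.ofReal_one]

lemma eps_chernoff [IsProbabilityMeasure μ] {C₁ : ℝ} (hC₁ : 0 < C₁) {n : ℕ}
    {ε : W → Fin n → ℝ} (hε : Measurable ε)
    (hindep : iIndepFun (fun i ω => ε ω i) μ)
    (htail : ∀ i (t : ℝ), 0 < t →
      μ {ω | t < |ε ω i|} ≤ ENNReal.ofReal (C₁ * Real.exp (-(t ^ 2) / C₁))) :
    μ {ω | 2 * C₁ * (1 + Real.log (1 + C₁)) * n ≤ ∑ i, ε ω i ^ 2}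
      ≤ ENNReal.ofReal (Real.exp (-(n : ℝ))) := by
  classical
  set lam : ℝ := (2 * C₁)⁻¹ with hlam
  have hlam0 : 0 < lam := by positivity
  set Z : Fin n → W → ℝ := fun i ω => ε ω i ^ 2 with hZ
  have hZmeas : ∀ i, Measurable (Z i) := fun i =>
    ((measurable_pi_apply i).comp hε).pow_const 2
  have hZindep : iIndepFun Z μ :=
    hindep.comp (fun _ x => x ^ 2) (fun _ => measurable_id.pow_const 2)
  have hlint : ∀ i, ∫⁻ ω, ENNReal.ofReal (Real.exp (lam * Z i ω)) ∂μ
      ≤ ENNReal.ofReal (1 + C₁) := fun i =>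
    exp_sq_lintegral hC₁ ((measurable_pi_apply i).comp hε) (htail i)
  have hint : ∀ i, Integrable (fun ω => Real.exp (lam * Z i ω)) μ := by
    intro i
    refine ⟨(((hZmeas i).const_mul lam).exp).aestronglyMeasurable, ?_⟩
    rw [hasFiniteIntegral_iff_ofReal (ae_of_all _ fun ω => (Real.exp_pos _).le)]
    exact lt_of_le_of_lt (hlint i) ENNReal.ofReal_lt_top
  have hmgf : ∀ i, mgf (Z i) μ lam ≤ 1 + C₁ := by
    intro i
    have heq : mgf (Z i) μ lam
        = (∫⁻ ω, ENNReal.ofReal (Real.exp (lam * Z i ω)) ∂μ).toReal := by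
      rw [mgf, integral_eq_lintegral_of_nonneg_ae (ae_of_all _ fun ω => (Real.exp_pos _).le)
        (((hZmeas i).const_mul lam).exp).aestronglyMeasurable]
    rw [heq]
    calc (∫⁻ ω, ENNReal.ofReal (Real.exp (lam * Z i ω)) ∂μ).toReal
        ≤ (ENNReal.ofReal (1 + C₁)).toReal :=
          ENNReal.toReal_mono ENNReal.ofReal_ne_top (hlint i)
      _ = 1 + C₁ := ENNReal.toReal_ofReal (by positivity)
  have hint_sum : Integrable (fun ω => Real.exp (lam * (∑ i, Z i) ω)) μ :=
    hZindep.integrable_exp_mul_sum hZmeas (fun i _ => hint i)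
  have hch := measure_ge_le_exp_mul_mgf (X := ∑ i, Z i) (μ := μ) (t := lam)
    (2 * C₁ * (1 + Real.log (1 + C₁)) * n) hlam0.le hint_sum
  rw [hZindep.mgf_sum hZmeas] at hch
  have hprod : ∏ i : Fin n, mgf (Z i) μ lam ≤ (1 + C₁) ^ n := by
    calc ∏ i : Fin n, mgf (Z i) μ lam ≤ ∏ _i : Fin n, (1 + C₁) :=
          Finset.prod_le_prod (fun i _ => mgf_nonneg) (fun i _ => hmgf i)
      _ = (1 + C₁) ^ n := by simp
  have hset : {ω | 2 * C₁ * (1 + Real.log (1 + C₁)) * n ≤ ∑ i, ε ω i ^ 2}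
      = {ω | 2 * C₁ * (1 + Real.log (1 + C₁)) * n ≤ (∑ i, Z i) ω} := by
    ext ω; simp [hZ]
  rw [hset]
  refine meas_le_ofReal (measure_ne_top μ _) ?_
  refine hch.trans ?_
  calc Real.exp (-lam * (2 * C₁ * (1 + Real.log (1 + C₁)) * n)) * ∏ i : Fin n, mgf (Z i) μ lam
      ≤ Real.exp (-lam * (2 * C₁ * (1 + Real.log (1 + C₁)) * n)) * (1 + C₁) ^ n := by
        exact mul_le_mul_of_nonneg_left hprod (Real.exp_pos _).le
    _ = Real.exp (-(n : ℝ)) := by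
        have h1C : (0:ℝ) < 1 + C₁ := by positivity
        have : ((1 + C₁) ^ n : ℝ) = Real.exp (n * Real.log (1 + C₁)) := by
          rw [← Real.log_pow, Real.exp_log (by positivity)]
        rw [this, ← Real.exp_add]
        congr 1
        have hlamval : lam * (2 * C₁) = 1 := by
          rw [hlam]; field_simp
        have : -lam * (2 * C₁ * (1 + Real.log (1 + C₁)) * n)
            = -(lam * (2 * C₁)) * ((1 + Real.log (1 + C₁)) * n) := by ring
        rw [this, hlamval]
        ring

lemma diag_le_lambdaMax {p : ℕ} {Cov : Matrix (Fin p) (Fin p) ℝ} (j : Fin p) :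
    Cov j j ≤ lambdaMax Cov := by
  classical
  set S := {r | ∃ x : Fin p → ℝ, ∑ i, (x i) ^ 2 = 1 ∧ r = x ⬝ᵥ Cov.mulVec x} with hS
  have hmem : Cov j j ∈ S := by
    refine ⟨Pi.single j 1, ?_, ?_⟩
    · simp [Pi.single_apply, pow_two, ite_mul, Finset.sum_ite_eq', Finset.sum_ite_eq]
    · simp [dotProduct, Matrix.mulVec, Pi.single_apply, ite_mul, mul_ite,
        Finset.sum_ite_eq', Finset.sum_ite_eq]
  have hbdd : BddAbove S := by
    have hSimg : S = (fun x : Fin p → ℝ => x ⬝ᵥ Cov.mulVec x) ''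
        {x : Fin p → ℝ | ∑ i, (x i) ^ 2 = 1} := by
      ext r
      simp only [hS, Set.mem_setOf_eq, Set.mem_image]
      exact ⟨fun ⟨x, h1, h2⟩ => ⟨x, h1, h2.symm⟩, fun ⟨x, h1, h2⟩ => ⟨x, h1, h2.symm⟩⟩
    rw [hSimg]
    have hcont : Continuous (fun x : Fin p → ℝ => x ⬝ᵥ Cov.mulVec x) := by
      unfold dotProduct Matrix.mulVec
      exact continuous_finset_sum _ fun i _ => (continuous_apply i).mul
        (continuous_finset_sum _ fun k _ => continuous_const.mul (continuous_apply k))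
    have hclosed : IsClosed {x : Fin p → ℝ | ∑ i, (x i) ^ 2 = 1} :=
      isClosed_eq (continuous_finset_sum _ fun i _ => (continuous_apply i).pow 2)
        continuous_const
    have hsubset : {x : Fin p → ℝ | ∑ i, (x i) ^ 2 = 1}
        ⊆ Set.pi Set.univ (fun _ : Fin p => Set.Icc (-1 : ℝ) 1) := by
      intro x hx
      intro i _
      have hle : (x i) ^ 2 ≤ 1 := by
        rw [← hx]
        exact Finset.single_le_sum (fun k _ => sq_nonneg (x k)) (Finset.mem_univ i)
      constructor
      · nlinarith [abs_nonneg (x i), sq_abs (x i)]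
      · nlinarith [abs_nonneg (x i), sq_abs (x i)]
    have hcomp : IsCompact {x : Fin p → ℝ | ∑ i, (x i) ^ 2 = 1} :=
      (isCompact_univ_pi fun _ => isCompact_Icc).of_isClosed_subset hclosed hsubset
    exact (hcomp.image hcont).bddAbove
  exact le_csSup hbdd hmem


set_option maxHeartbeats 2000000 in
/-- Lemma B.1 of the paper: with probability at least `1 - p^{-c}`,
`‖n⁻¹ Xᵀ ε‖∞ ≤ C √((log p)/n)`. -/
theorem stmt_7 :
    ∀ M C₁ : ℝ, 1 ≤ M → 0 < C₁ →
      ∃ c > (0 : ℝ), ∃ C > (0 : ℝ),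
        ∀ (n p : ℕ), 1 ≤ n → 2 ≤ p → C ^ 2 * Real.log p ≤ n →
          ∀ (W : Type) [inst : MeasurableSpace W] (μ : Measure W),
            IsProbabilityMeasure μ →
            ∀ (Cov : Matrix (Fin p) (Fin p) ℝ), Cov.PosSemidef → lambdaMax Cov ≤ M →
              ∀ (X : W → Fin n → Fin p → ℝ) (ε : W → Fin n → ℝ),
                Measurable X → Measurable ε →
                -- the rows of X are independent ...
                iIndepFun (fun i ω => X ω i) μ →
                -- ... and each row is N(0, Cov)
                (∀ i, IsCenteredGaussian μ (fun ω => X ω i) Cov) →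
                -- ε is independent of X
                IndepFun X ε μ →
                -- the components of ε are i.i.d. with sub-Gaussian tails
                iIndepFun (fun i ω => ε ω i) μ →
                (∀ i j, μ.map (fun ω => ε ω i) = μ.map (fun ω => ε ω j)) →
                (∀ i t, 0 < t →
                  μ {ω | t < |ε ω i|} ≤ ENNReal.ofReal (C₁ * Real.exp (-(t ^ 2) / C₁))) →
                ENNReal.ofReal (1 - (p : ℝ) ^ (-c)) ≤
                  μ {ω | ∀ j, |(n : ℝ)⁻¹ * ∑ i, ε ω i * X ω i j| ≤
                    C * Real.sqrt (Real.log p / n)} := by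
  intro M C₁ hM hC₁
  set K : ℝ := 2 * C₁ * (1 + Real.log (1 + C₁)) with hK
  have hlog1C : 0 < Real.log (1 + C₁) := Real.log_pos (by linarith)
  have hK0 : 0 < K := by positivity
  set C : ℝ := 2 + Real.sqrt (8 * K * M) with hCdef
  have hM0 : (0:ℝ) < M := lt_of_lt_of_le one_pos hM
  have hsq8 : Real.sqrt (8 * K * M) ^ 2 = 8 * K * M := Real.sq_sqrt (by positivity)
  have hC2 : (2:ℝ) ≤ C := by
    have := Real.sqrt_nonneg (8 * K * M); simp only [hCdef]; linarith
  have hC0 : (0:ℝ) < C := by linarith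
  have hCsq : 8 * K * M ≤ C ^ 2 := by
    have h := Real.sqrt_nonneg (8 * K * M)
    nlinarith
  refine ⟨1, one_pos, C, hC0, ?_⟩
  intro n p hn hp hnp W instW μ hprob Cov hpsd hlmax X ε hX hε hrows hgauss hXε hepsindep _ htail
  classical
  have hn0 : (0:ℝ) < n := by exact_mod_cast hn
  have hp2 : (2:ℝ) ≤ (p:ℝ) := by exact_mod_cast hp
  have hq0 : (0:ℝ) < (p:ℝ) := by linarith
  have hlogp : 0 < Real.log p := Real.log_pos (by linarith)
  set thr : ℝ := C * Real.sqrt (Real.log p / n) with hthr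
  set s : ℝ := (n:ℝ) * thr with hsdef
  have hsqrt_sq : Real.sqrt (Real.log p / n) ^ 2 = Real.log p / n :=
    Real.sq_sqrt (by positivity)
  have hs2 : s ^ 2 = C ^ 2 * n * Real.log p := by
    rw [hsdef, hthr, mul_pow, mul_pow, hsqrt_sq]
    field_simp
  have hs0 : 0 < s := by
    rw [hsdef, hthr]
    have : 0 < Real.sqrt (Real.log p / n) := Real.sqrt_pos.2 (by positivity)
    positivity
  set lam : ℝ := s / (K * n * M) with hlamdef
  have hlam0 : 0 ≤ lam := by positivity
  have hKnM : (0:ℝ) < K * n * M := by positivity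
  -- the exponent bound for a single tail
  have hexp_le : ∀ (j : Fin p) (e : Fin n → ℝ), (∑ i, e i ^ 2) ≤ K * n →
      -lam * s + lam ^ 2 * (Cov j j * ∑ i, e i ^ 2) / 2
        ≤ -(C ^ 2 / (2 * K * M)) * Real.log p := by
    intro j e he
    have hCovM : Cov j j ≤ M := (diag_le_lambdaMax j).trans hlmax
    have hCov0 : 0 ≤ Cov j j := diag_nonneg' hpsd j
    have hesq0 : 0 ≤ ∑ i, e i ^ 2 := Finset.sum_nonneg fun i _ => sq_nonneg _
    have hcs : Cov j j * ∑ i, e i ^ 2 ≤ K * n * M := by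
      calc Cov j j * ∑ i, e i ^ 2 ≤ M * (K * n) := mul_le_mul hCovM he hesq0 hM0.le
        _ = K * n * M := by ring
    have h1 : lam ^ 2 * (Cov j j * ∑ i, e i ^ 2) / 2 ≤ s ^ 2 / (2 * (K * n * M)) := by
      calc lam ^ 2 * (Cov j j * ∑ i, e i ^ 2) / 2 ≤ lam ^ 2 * (K * n * M) / 2 := by gcongr
        _ = s ^ 2 / (2 * (K * n * M)) := by
            rw [hlamdef]; field_simp
    have h2 : -lam * s = -(s ^ 2 / (K * n * M)) := by
      rw [hlamdef]; field_simp
    have h3 : -(s ^ 2 / (K * n * M)) + s ^ 2 / (2 * (K * n * M))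
        = -(s ^ 2 / (2 * (K * n * M))) := by field_simp; ring
    have h4 : -(s ^ 2 / (2 * (K * n * M))) = -(C ^ 2 / (2 * K * M)) * Real.log p := by
      rw [hs2]; field_simp
    calc -lam * s + lam ^ 2 * (Cov j j * ∑ i, e i ^ 2) / 2
        ≤ -(s ^ 2 / (K * n * M)) + s ^ 2 / (2 * (K * n * M)) := by rw [← h2]; linarith
      _ = -(C ^ 2 / (2 * K * M)) * Real.log p := by rw [h3, h4]
  -- tail bound for one column and one sign
  have htailj : ∀ (j : Fin p) (e : Fin n → ℝ), (∑ i, e i ^ 2) ≤ K * n →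
      μ {ω | s ≤ ∑ i, e i * X ω i j}
        ≤ ENNReal.ofReal (Real.exp (-(C ^ 2 / (2 * K * M)) * Real.log p)) := by
    intro j e he
    refine meas_le_ofReal (measure_ne_top μ _) ?_
    refine (chernoff_col hpsd hX hrows hgauss e j hlam0).trans ?_
    exact Real.exp_le_exp.2 (hexp_le j e he)
  -- the event as a set in the product space
  set SD : Set ((Fin n → ℝ) × (Fin n → Fin p → ℝ)) :=
    {q | ∀ j, |(n:ℝ)⁻¹ * ∑ i, q.1 i * q.2 i j| ≤ thr} with hSD
  have hmeas_fun : ∀ j : Fin p, Measurable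
      (fun q : (Fin n → ℝ) × (Fin n → Fin p → ℝ) => (n:ℝ)⁻¹ * ∑ i, q.1 i * q.2 i j) :=
    fun j => by fun_prop
  have hsd : MeasurableSet SD := by
    have : SD = ⋂ j, {q : (Fin n → ℝ) × (Fin n → Fin p → ℝ) |
        |(n:ℝ)⁻¹ * ∑ i, q.1 i * q.2 i j| ≤ thr} := by
      ext q; simp [hSD, Set.mem_iInter]
    rw [this]
    exact MeasurableSet.iInter fun j => measurableSet_le (hmeas_fun j).abs measurable_const
  have hpairmeas : Measurable (fun ω => (ε ω, X ω)) := hε.prodMk hX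
  have hmapprod : μ.map (fun ω => (ε ω, X ω)) = (μ.map ε).prod (μ.map X) :=
    (indepFun_iff_map_prod_eq_prod_map_map hε.aemeasurable hX.aemeasurable).1 hXε.symm
  have instX : IsProbabilityMeasure (μ.map X) := Measure.isProbabilityMeasure_map hX.aemeasurable
  have instE : IsProbabilityMeasure (μ.map ε) := Measure.isProbabilityMeasure_map hε.aemeasurable
  -- the "good" set of noise vectors
  set A : Set (Fin n → ℝ) := {e | ∑ i, e i ^ 2 ≤ K * n} with hA
  have hAmeas : MeasurableSet A :=
    measurableSet_le (Finset.measurable_sum _ fun i _ => (measurable_pi_apply i).pow_const 2)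
      measurable_const
  set G : ℝ≥0∞ := ENNReal.ofReal (2 * p * Real.exp (-(C ^ 2 / (2 * K * M)) * Real.log p))
    with hG
  -- pointwise bound on slices
  have hpt : ∀ e : Fin n → ℝ, (μ.map X) (Prod.mk e ⁻¹' SDᶜ)
      ≤ A.indicator (fun _ => G) e + Aᶜ.indicator (fun _ => 1) e := by
    intro e
    by_cases he : e ∈ A
    · rw [Set.indicator_of_mem he, Set.indicator_of_notMem (by simp [he]), add_zero]
      have hslice : (μ.map X) (Prod.mk e ⁻¹' SDᶜ)
          = μ {ω | ¬ ∀ j, |(n:ℝ)⁻¹ * ∑ i, e i * X ω i j| ≤ thr} := by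
        rw [Measure.map_apply hX (hsd.compl.preimage measurable_prodMk_left)]
        rfl
      rw [hslice]
      have hsubset : {ω | ¬ ∀ j, |(n:ℝ)⁻¹ * ∑ i, e i * X ω i j| ≤ thr}
          ⊆ ⋃ j, ({ω | s ≤ ∑ i, e i * X ω i j}
              ∪ {ω | s ≤ ∑ i, (fun i => -e i) i * X ω i j}) := by
        intro ω hω
        simp only [Set.mem_setOf_eq, not_forall] at hω
        obtain ⟨j, hj⟩ := hω
        push_neg at hj
        have habs : s < |∑ i, e i * X ω i j| := by
          have h1 : |(n:ℝ)⁻¹ * ∑ i, e i * X ω i j|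
              = (n:ℝ)⁻¹ * |∑ i, e i * X ω i j| := by
            rw [abs_mul, abs_of_pos (by positivity : (0:ℝ) < (n:ℝ)⁻¹)]
          rw [h1] at hj
          rw [hsdef]
          calc (n:ℝ) * thr < (n:ℝ) * ((n:ℝ)⁻¹ * |∑ i, e i * X ω i j|) := by
                exact (mul_lt_mul_iff_right₀ hn0).2 hj
            _ = |∑ i, e i * X ω i j| := by field_simp
        rcases abs_cases (∑ i, e i * X ω i j) with ⟨heq, _⟩ | ⟨heq, _⟩
        · exact Set.mem_iUnion.2 ⟨j, Or.inl (le_of_lt (heq ▸ habs))⟩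
        · refine Set.mem_iUnion.2 ⟨j, Or.inr ?_⟩
          have hneg : ∑ i, (fun i => -e i) i * X ω i j = -∑ i, e i * X ω i j := by
            rw [← Finset.sum_neg_distrib]
            exact Finset.sum_congr rfl fun i _ => by ring
          simp only [Set.mem_setOf_eq, hneg]
          rw [heq] at habs
          exact le_of_lt habs
      have hesq : ∑ i, (fun i => -e i) i ^ 2 = ∑ i, e i ^ 2 := by
        exact Finset.sum_congr rfl fun i _ => by ring
      calc μ {ω | ¬ ∀ j, |(n:ℝ)⁻¹ * ∑ i, e i * X ω i j| ≤ thr}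
          ≤ μ (⋃ j, ({ω | s ≤ ∑ i, e i * X ω i j}
              ∪ {ω | s ≤ ∑ i, (fun i => -e i) i * X ω i j})) := measure_mono hsubset
        _ ≤ ∑' j : Fin p, μ ({ω | s ≤ ∑ i, e i * X ω i j}
              ∪ {ω | s ≤ ∑ i, (fun i => -e i) i * X ω i j}) := measure_iUnion_le _
        _ = ∑ j : Fin p, μ ({ω | s ≤ ∑ i, e i * X ω i j}
              ∪ {ω | s ≤ ∑ i, (fun i => -e i) i * X ω i j}) := tsum_fintype _
        _ ≤ ∑ j : Fin p, (ENNReal.ofReal (Real.exp (-(C ^ 2 / (2 * K * M)) * Real.log p))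
              + ENNReal.ofReal (Real.exp (-(C ^ 2 / (2 * K * M)) * Real.log p))) := by
            refine Finset.sum_le_sum fun j _ => ?_
            refine (measure_union_le _ _).trans ?_
            exact add_le_add (htailj j e he) (htailj j (fun i => -e i) (by rw [hesq]; exact he))
        _ ≤ G := by
            rw [Finset.sum_const, Finset.card_univ, Fintype.card_fin, nsmul_eq_mul]
            rw [← ENNReal.ofReal_add (Real.exp_pos _).le (Real.exp_pos _).le]
            rw [← ENNReal.ofReal_natCast p,
              ← ENNReal.ofReal_mul (by positivity : (0:ℝ) ≤ (p:ℝ))]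
            apply ENNReal.ofReal_le_ofReal
            apply le_of_eq
            ring
    · rw [Set.indicator_of_notMem he, Set.indicator_of_mem (by simpa using he), zero_add]
      exact prob_le_one
  -- conclude the bound on the complement in the product space
  have hcompl : ((μ.map ε).prod (μ.map X)) SDᶜ
      ≤ G + ENNReal.ofReal (Real.exp (-(n:ℝ))) := by
    rw [Measure.prod_apply hsd.compl]
    calc ∫⁻ e, (μ.map X) (Prod.mk e ⁻¹' SDᶜ) ∂(μ.map ε)
        ≤ ∫⁻ e, (A.indicator (fun _ => G) e + Aᶜ.indicator (fun _ => 1) e) ∂(μ.map ε) :=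
          lintegral_mono hpt
      _ = G * (μ.map ε) A + (μ.map ε) Aᶜ := by
          rw [lintegral_add_left (measurable_const.indicator hAmeas),
            lintegral_indicator_const hAmeas, lintegral_indicator_const hAmeas.compl, one_mul]
      _ ≤ G * 1 + ENNReal.ofReal (Real.exp (-(n:ℝ))) := by
          refine add_le_add (mul_le_mul_right prob_le_one _) ?_
          rw [Measure.map_apply hε hAmeas.compl]
          refine le_trans (measure_mono ?_) (eps_chernoff hC₁ hε hepsindep htail)
          intro ω hω
          simp only [Set.mem_preimage, Set.mem_compl_iff, hA, Set.mem_setOf_eq, not_le] at hω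
          exact le_of_lt hω
      _ = G + ENNReal.ofReal (Real.exp (-(n:ℝ))) := by rw [mul_one]
  -- numerics
  have hnum : G + ENNReal.ofReal (Real.exp (-(n:ℝ))) ≤ ENNReal.ofReal ((p:ℝ) ^ (-(1:ℝ))) := by
    rw [hG, ← ENNReal.ofReal_add (by positivity) (Real.exp_pos _).le]
    apply ENNReal.ofReal_le_ofReal
    have hq1 : (1:ℝ) ≤ (p:ℝ) := by linarith
    have hbeta : (4:ℝ) ≤ C ^ 2 / (2 * K * M) := by
      rw [le_div_iff₀ (by positivity)]
      linarith
    have hrw : ∀ y : ℝ, Real.exp (-y * Real.log p) = (p:ℝ) ^ (-y) := by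
      intro y
      rw [Real.rpow_def_of_pos hq0]
      ring_nf
    have hg1 : 2 * (p:ℝ) * Real.exp (-(C ^ 2 / (2 * K * M)) * Real.log p)
        ≤ 2 * (p:ℝ) * (p:ℝ) ^ (-(4:ℝ)) := by
      rw [hrw]
      have h := Real.rpow_le_rpow_of_exponent_le hq1
        (by linarith : -(C ^ 2 / (2 * K * M)) ≤ -(4:ℝ))
      exact mul_le_mul_of_nonneg_left h (by positivity)
    have hC4 : (4:ℝ) ≤ C ^ 2 := by nlinarith [hC2, Real.sqrt_nonneg (8 * K * M)]
    have hg2 : Real.exp (-(n:ℝ)) ≤ (p:ℝ) ^ (-(4:ℝ)) := by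
      rw [← hrw]
      apply Real.exp_le_exp.2
      have h4l : 4 * Real.log p ≤ C ^ 2 * Real.log p :=
        mul_le_mul_of_nonneg_right hC4 hlogp.le
      linarith [hnp]
    have hq4 : 2 * (p:ℝ) * (p:ℝ) ^ (-(4:ℝ)) = 2 * (p:ℝ) ^ (-(3:ℝ)) := by
      rw [mul_assoc]
      congr 1
      have : (p:ℝ) * (p:ℝ) ^ (-(4:ℝ)) = (p:ℝ) ^ ((1:ℝ) + -(4:ℝ)) := by
        rw [Real.rpow_add hq0, Real.rpow_one]
      rw [this]
      norm_num
    have hpow : ∀ k : ℕ, (p:ℝ) ^ (-(k:ℝ)) = ((p:ℝ) ^ k)⁻¹ := by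
      intro k
      rw [Real.rpow_neg hq0.le, Real.rpow_natCast]
    have hfin : 2 * (p:ℝ) ^ (-(3:ℝ)) + (p:ℝ) ^ (-(4:ℝ)) ≤ (p:ℝ) ^ (-(1:ℝ)) := by
      have h3 : (p:ℝ) ^ (-(3:ℝ)) = ((p:ℝ) ^ (3:ℕ))⁻¹ := by
        rw [← hpow 3]; norm_num
      have h4 : (p:ℝ) ^ (-(4:ℝ)) = ((p:ℝ) ^ (4:ℕ))⁻¹ := by
        rw [← hpow 4]; norm_num
      have h1 : (p:ℝ) ^ (-(1:ℝ)) = ((p:ℝ) ^ (1:ℕ))⁻¹ := by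
        rw [← hpow 1]; norm_num
      rw [h3, h4, h1, pow_one]
      have hp4 : (0:ℝ) < (p:ℝ) ^ (4:ℕ) := by positivity
      have heq2 : 2 * ((p:ℝ) ^ (3:ℕ))⁻¹ + ((p:ℝ) ^ (4:ℕ))⁻¹ = (2 * (p:ℝ) + 1) / (p:ℝ) ^ (4:ℕ) := by
        field_simp
      rw [heq2, div_le_iff₀ hp4]
      have hq3 : (p:ℝ)⁻¹ * (p:ℝ) ^ (4:ℕ) = (p:ℝ) ^ (3:ℕ) := by
        field_simp
      rw [hq3]
      nlinarith [sq_nonneg ((p:ℝ) - 2), hp2]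
    linarith [hg1, hg2, hq4.le, hfin]
  -- put everything together
  have hEmeas : MeasurableSet {ω | ∀ j, |(n:ℝ)⁻¹ * ∑ i, ε ω i * X ω i j| ≤ thr} :=
    hsd.preimage hpairmeas
  have hEc : μ {ω | ∀ j, |(n:ℝ)⁻¹ * ∑ i, ε ω i * X ω i j| ≤ thr}ᶜ
      = ((μ.map ε).prod (μ.map X)) SDᶜ := by
    rw [← hmapprod, Measure.map_apply hpairmeas hsd.compl]
    rfl
  have hcompl2 : μ {ω | ∀ j, |(n:ℝ)⁻¹ * ∑ i, ε ω i * X ω i j| ≤ thr}ᶜ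
      ≤ ENNReal.ofReal ((p:ℝ) ^ (-(1:ℝ))) := by
    rw [hEc]; exact hcompl.trans hnum
  have hsum := measure_add_measure_compl (μ := μ) hEmeas
  rw [measure_univ] at hsum
  have : ENNReal.ofReal (1 - (p:ℝ) ^ (-(1:ℝ)))
      ≤ μ {ω | ∀ j, |(n:ℝ)⁻¹ * ∑ i, ε ω i * X ω i j| ≤ thr} := by
    rw [ENNReal.ofReal_sub _ (by positivity), ENNReal.ofReal_one]
    rw [tsub_le_iff_right]
    calc (1:ℝ≥0∞) = μ {ω | ∀ j, |(n:ℝ)⁻¹ * ∑ i, ε ω i * X ω i j| ≤ thr}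
          + μ {ω | ∀ j, |(n:ℝ)⁻¹ * ∑ i, ε ω i * X ω i j| ≤ thr}ᶜ := hsum.symm
      _ ≤ _ := add_le_add le_rfl hcompl2
  exact this

end
end

section
/- Let p ≥ 1 be an integer, W = (W₁,…,W_p) ∈ ℝ^p, q ∈ (0,1), a ≥ 0, and let S₂ ⊆ {1,…,p} be nonempty with q·|S₂| ≥ 1. Assume W_j ≥ −a for every 1 ≤ j ≤ p and W_j > a for every j ∈ S₂. Let 𝒲 = {|W_j| : W_j ≠ 0} and 𝒯 = { t ∈ 𝒲 : (1 + |{j : W_j ≤ −t}|) ≤ q·|{j : W_j ≥ t}| }. Then 𝒯 is nonempty, and with T = min 𝒯 one has S₂ ⊆ {j : W_j ≥ T}; in particular |{j : W_j ≥ T}| ≥ |S₂|. -/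
open Finset
open scoped Classical BigOperators

noncomputable section

/-- existence and behavior of the knockoffs+ threshold when all
statistics are bounded below by `-a` and the signals in `S₂` exceed `a`. -/
theorem stmt_12 (p : ℕ) (hp : 1 ≤ p) (W : Fin p → ℝ) (q a : ℝ)
    (hq0 : 0 < q) (hq1 : q < 1) (ha : 0 ≤ a)
    (S₂ : Finset (Fin p)) (hS₂ : S₂.Nonempty) (hqS₂ : (1 : ℝ) ≤ q * S₂.card)
    (hlow : ∀ j, -a ≤ W j) (hsig : ∀ j ∈ S₂, a < W j) :
    ∃ hne : ((Finset.univ.filter fun j => W j ≠ 0).image fun j => |W j|).filter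
        (fun t => (1 + ((Finset.univ.filter fun j => W j ≤ -t).card : ℝ)) ≤
          q * ((Finset.univ.filter fun j => t ≤ W j).card : ℝ)) |>.Nonempty,
      S₂ ⊆ (Finset.univ.filter fun j =>
          (((Finset.univ.filter fun j => W j ≠ 0).image fun j => |W j|).filter
            (fun t => (1 + ((Finset.univ.filter fun j => W j ≤ -t).card : ℝ)) ≤
              q * ((Finset.univ.filter fun j => t ≤ W j).card : ℝ))).min' hne ≤ W j) ∧
      S₂.card ≤ (Finset.univ.filter fun j =>
          (((Finset.univ.filter fun j => W j ≠ 0).image fun j => |W j|).filter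
            (fun t => (1 + ((Finset.univ.filter fun j => W j ≤ -t).card : ℝ)) ≤
              q * ((Finset.univ.filter fun j => t ≤ W j).card : ℝ))).min' hne ≤ W j).card := by
  obtain ⟨j₀, hj₀S, hj₀min⟩ := S₂.exists_min_image W hS₂
  have hj₀pos : a < W j₀ := hsig j₀ hj₀S
  have ht0pos : 0 < W j₀ := lt_of_le_of_lt ha hj₀pos
  set 𝒯 := ((Finset.univ.filter fun j => W j ≠ 0).image fun j => |W j|).filter
        (fun t => (1 + ((Finset.univ.filter fun j => W j ≤ -t).card : ℝ)) ≤
          q * ((Finset.univ.filter fun j => t ≤ W j).card : ℝ)) with h𝒯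
  have ht0mem : W j₀ ∈ 𝒯 := by
    rw [h𝒯, Finset.mem_filter]
    constructor
    · refine Finset.mem_image.mpr ⟨j₀, ?_, abs_of_pos ht0pos⟩
      simp [ne_of_gt ht0pos]
    · have hneg : (Finset.univ.filter fun j => W j ≤ -(W j₀)) = ∅ := by
        apply Finset.filter_false_of_mem
        intro j _
        have : -a ≤ W j := hlow j
        linarith
      have hsub : S₂ ⊆ Finset.univ.filter fun j => W j₀ ≤ W j := by
        intro j hj
        simp only [Finset.mem_filter, Finset.mem_univ, true_and]
        exact hj₀min j hj
      have hcard : (S₂.card : ℝ) ≤ ((Finset.univ.filter fun j => W j₀ ≤ W j).card : ℝ) := by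
        exact_mod_cast Finset.card_le_card hsub
      have : q * (S₂.card : ℝ) ≤ q * ((Finset.univ.filter fun j => W j₀ ≤ W j).card : ℝ) :=
        mul_le_mul_of_nonneg_left hcard hq0.le
      rw [hneg]
      simp only [Finset.card_empty, Nat.cast_zero, add_zero]
      linarith
  have hne : 𝒯.Nonempty := ⟨_, ht0mem⟩
  have hTle : 𝒯.min' hne ≤ W j₀ := Finset.min'_le _ _ ht0mem
  have hsub : S₂ ⊆ Finset.univ.filter fun j => 𝒯.min' hne ≤ W j := by
    intro j hj
    simp only [Finset.mem_filter, Finset.mem_univ, true_and]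
    exact le_trans hTle (hj₀min j hj)
  exact ⟨hne, hsub, Finset.card_le_card hsub⟩

end
end

section
/- Let p ≥ 1 be an integer, β ∈ ℝ^p a vector with nonempty support S₀ = {j : β_j ≠ 0}, and β̂ ∈ ℝ^{2p}. For 1 ≤ j ≤ p set W_j = |β̂_j| − |β̂_{p+j}|, and for T ≥ 0 let Ŝ = {1 ≤ j ≤ p : W_j ≥ T}. Then ∑_{j=1}^p ( |β̂_j − β_j| + |β̂_{p+j}| ) ≥ ( min_{j∈S₀} |β_j| − T ) · |S₀ \ Ŝ|, where |S₀ \ Ŝ| denotes the number of indices in S₀ not selected. Note that the left-hand side equals ‖β̂ − (βᵀ, 0ᵀ)ᵀ‖₁, the ℓ₁ distance from β̂ to the vector in ℝ^{2p} whose first p coordinates are β and whose last p coordinates are zero. -/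
open Finset
open scoped Classical BigOperators

noncomputable section

/-- missed-signal bound for the Lasso coefficient difference statistics.
Here `βh : Fin p ⊕ Fin p → ℝ` plays the role of `β̂ ∈ ℝ^{2p}`, with `Sum.inl j`
the `j`-th coordinate and `Sum.inr j` the `(p+j)`-th coordinate. -/
theorem stmt_13 (p : ℕ) (hp : 0 < p) (β : Fin p → ℝ)
    (hS₀ : (Finset.univ.filter fun j => β j ≠ 0).Nonempty)
    (βh : Fin p ⊕ Fin p → ℝ) (T : ℝ) (hT : 0 ≤ T) :
    ((⨅ j : {j // j ∈ Finset.univ.filter fun j => β j ≠ 0}, |β j.1|) - T) *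
        (((Finset.univ.filter fun j => β j ≠ 0)) \
          (Finset.univ.filter fun j =>
            T ≤ |βh (Sum.inl j)| - |βh (Sum.inr j)|)).card ≤
      ∑ j, (|βh (Sum.inl j) - β j| + |βh (Sum.inr j)|) := by
  set S₀ := Finset.univ.filter fun j => β j ≠ 0 with hS₀def
  set Sh := Finset.univ.filter fun j : Fin p =>
    T ≤ |βh (Sum.inl j)| - |βh (Sum.inr j)| with hShdef
  set m := ⨅ j : {j // j ∈ S₀}, |β j.1| with hm
  have hbdd : BddBelow (Set.range fun j : {j // j ∈ S₀} => |β j.1|) :=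
    ⟨0, by rintro x ⟨j, rfl⟩; positivity⟩
  have key : ∀ j ∈ S₀ \ Sh, m - T ≤ |βh (Sum.inl j) - β j| + |βh (Sum.inr j)| := by
    intro j hj
    rw [Finset.mem_sdiff] at hj
    have h1 : m ≤ |β j| := ciInf_le hbdd ⟨j, hj.1⟩
    have h2 : ¬ T ≤ |βh (Sum.inl j)| - |βh (Sum.inr j)| := by
      have := hj.2
      simpa [hShdef] using this
    have h3 : |β j| - |βh (Sum.inl j)| ≤ |β j - βh (Sum.inl j)| :=
      abs_sub_abs_le_abs_sub _ _
    rw [abs_sub_comm] at h3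
    have h4 : 0 ≤ |βh (Sum.inr j)| := abs_nonneg _
    linarith
  calc (m - T) * ((S₀ \ Sh).card : ℕ)
      ≤ ∑ j ∈ S₀ \ Sh, (|βh (Sum.inl j) - β j| + |βh (Sum.inr j)|) := by
        have := Finset.card_nsmul_le_sum (S₀ \ Sh)
          (fun j => |βh (Sum.inl j) - β j| + |βh (Sum.inr j)|) (m - T) key
        rw [nsmul_eq_mul] at this
        linarith [this]
    _ ≤ ∑ j, (|βh (Sum.inl j) - β j| + |βh (Sum.inr j)|) :=
        Finset.sum_le_sum_of_subset_of_nonneg (Finset.subset_univ _)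
          (fun j _ _ => by positivity)

end
end

section
/- Let m ≥ 1 be an integer, G̃ an m×m real symmetric positive semidefinite matrix, ρ̃ ∈ ℝ^m, λ > 0, and β* ∈ ℝ^m with support S₀ = {j : β*_j ≠ 0}. Assume ‖ρ̃ − G̃β*‖∞ ≤ λ/2. Let β̂ ∈ ℝ^m be a minimizer over b ∈ ℝ^m of L(b) = (1/2)·bᵀG̃b − ρ̃ᵀb + λ‖b‖₁, and set δ = β̂ − β*. Then (1/2)·δᵀG̃δ + (λ/2)·∑_{j∉S₀}|δ_j| ≤ (3λ/2)·∑_{j∈S₀}|δ_j|; in particular the cone condition ∑_{j∉S₀}|δ_j| ≤ 3·∑_{j∈S₀}|δ_j| holds. -/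
open Matrix Finset
open scoped Classical BigOperators

noncomputable section

/-- Supremum norm of a real vector. -/
def supNorm {ι : Type*} [Fintype ι] (v : ι → ℝ) : ℝ := ⨆ i, |v i|

/-- basic inequality and cone condition for the generalized Lasso. -/
theorem stmt_15 (m : ℕ) (hm : 1 ≤ m)
    (Gt : Matrix (Fin m) (Fin m) ℝ) (hGsymm : Gt.IsSymm) (hGpsd : Gt.PosSemidef)
    (ρt : Fin m → ℝ) (lam : ℝ) (hlam : 0 < lam) (βstar : Fin m → ℝ)
    (hnoise : supNorm (ρt - Gt.mulVec βstar) ≤ lam / 2)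
    (βh : Fin m → ℝ)
    (hmin : ∀ b : Fin m → ℝ,
      (1 / 2 : ℝ) * (βh ⬝ᵥ Gt.mulVec βh) - ρt ⬝ᵥ βh + lam * ∑ j, |βh j| ≤
        (1 / 2 : ℝ) * (b ⬝ᵥ Gt.mulVec b) - ρt ⬝ᵥ b + lam * ∑ j, |b j|) :
    (1 / 2 : ℝ) * ((βh - βstar) ⬝ᵥ Gt.mulVec (βh - βstar)) +
        (lam / 2) * ∑ j ∈ Finset.univ.filter (fun j => βstar j = 0), |βh j - βstar j| ≤
      (3 * lam / 2) * ∑ j ∈ Finset.univ.filter (fun j => βstar j ≠ 0), |βh j - βstar j| ∧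
    (∑ j ∈ Finset.univ.filter (fun j => βstar j = 0), |βh j - βstar j|) ≤
      3 * ∑ j ∈ Finset.univ.filter (fun j => βstar j ≠ 0), |βh j - βstar j| := by
  have hne : Nonempty (Fin m) := ⟨⟨0, hm⟩⟩
  set v : Fin m → ℝ := ρt - Gt.mulVec βstar with hv
  -- componentwise bound from sup norm
  have hvb : ∀ i, |v i| ≤ lam / 2 := fun i =>
    (le_ciSup (Set.Finite.bddAbove (Set.finite_range _)) i).trans hnoise
  -- symmetry of the quadratic form
  have hsymm : ∀ x y : Fin m → ℝ, x ⬝ᵥ Gt.mulVec y = y ⬝ᵥ Gt.mulVec x := by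
    intro x y
    rw [Matrix.dotProduct_mulVec, ← Matrix.mulVec_transpose, hGsymm.eq, dotProduct_comm]
  -- PSD
  have hQ : 0 ≤ (βh - βstar) ⬝ᵥ Gt.mulVec (βh - βstar) := by
    have := hGpsd.dotProduct_mulVec_nonneg (βh - βstar)
    simpa using this
  -- expansion of quadratic form
  have hexp : βh ⬝ᵥ Gt.mulVec βh =
      (βh - βstar) ⬝ᵥ Gt.mulVec (βh - βstar) + 2 * ((βh - βstar) ⬝ᵥ Gt.mulVec βstar)
        + βstar ⬝ᵥ Gt.mulVec βstar := by
    have h1 := hsymm βstar βh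
    simp only [Matrix.mulVec_sub, sub_dotProduct, dotProduct_sub]
    linarith
  -- dot product bound
  have hdot : v ⬝ᵥ (βh - βstar) ≤ (lam / 2) * ∑ j, |βh j - βstar j| := by
    rw [dotProduct, Finset.mul_sum]
    apply Finset.sum_le_sum
    intro i _
    calc v i * (βh - βstar) i ≤ |v i * (βh - βstar) i| := le_abs_self _
      _ = |v i| * |βh i - βstar i| := by rw [abs_mul]; rfl
      _ ≤ (lam / 2) * |βh i - βstar i| :=
        mul_le_mul_of_nonneg_right (hvb i) (abs_nonneg _)
  -- v ⬝ᵥ δ in terms of the pieces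
  have hvδ : v ⬝ᵥ (βh - βstar) =
      ρt ⬝ᵥ βh - ρt ⬝ᵥ βstar - (βh - βstar) ⬝ᵥ Gt.mulVec βstar := by
    rw [hv]
    simp only [sub_dotProduct, dotProduct_sub]
    rw [dotProduct_comm (Gt.mulVec βstar) βh, dotProduct_comm (Gt.mulVec βstar) βstar]
    ring
  -- sums split
  have hsplit : ∀ f : Fin m → ℝ, ∑ j, f j =
      ∑ j ∈ Finset.univ.filter (fun j => βstar j = 0), f j +
      ∑ j ∈ Finset.univ.filter (fun j => βstar j ≠ 0), f j := fun f =>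
    (Finset.sum_filter_add_sum_filter_not Finset.univ (fun j => βstar j = 0) f).symm
  -- ℓ1 bounds
  have hZ : ∑ j ∈ Finset.univ.filter (fun j => βstar j = 0), (|βstar j| - |βh j|) =
      - ∑ j ∈ Finset.univ.filter (fun j => βstar j = 0), |βh j - βstar j| := by
    rw [← Finset.sum_neg_distrib]
    apply Finset.sum_congr rfl
    intro j hj
    have h0 : βstar j = 0 := (Finset.mem_filter.mp hj).2
    simp [h0]
  have hN : ∑ j ∈ Finset.univ.filter (fun j => βstar j ≠ 0), (|βstar j| - |βh j|) ≤
      ∑ j ∈ Finset.univ.filter (fun j => βstar j ≠ 0), |βh j - βstar j| :=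
    Finset.sum_le_sum fun j _ =>
      (abs_sub_abs_le_abs_sub _ _).trans_eq (abs_sub_comm _ _)
  have hl1 : ∑ j, |βstar j| - ∑ j, |βh j| ≤
      ∑ j ∈ Finset.univ.filter (fun j => βstar j ≠ 0), |βh j - βstar j| -
      ∑ j ∈ Finset.univ.filter (fun j => βstar j = 0), |βh j - βstar j| := by
    have := hsplit (fun j => |βstar j| - |βh j|)
    rw [Finset.sum_sub_distrib] at this
    linarith
  have hδsplit := hsplit (fun j => |βh j - βstar j|)
  have hkey := hmin βstar
  constructor
  · nlinarith [hdot, hl1, hδsplit]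
  · have h1 : (lam / 2) *
        (∑ j ∈ Finset.univ.filter (fun j => βstar j = 0), |βh j - βstar j|) ≤
        (3 * lam / 2) *
        (∑ j ∈ Finset.univ.filter (fun j => βstar j ≠ 0), |βh j - βstar j|) := by
      nlinarith [hdot, hl1, hδsplit]
    nlinarith [h1]

end
end

section
/- Let m ≥ 1 be an integer, G̃ an m×m real symmetric positive semidefinite matrix, ρ̃ ∈ ℝ^m, λ > 0, and β* ∈ ℝ^m with nonempty support S₀ of cardinality s = |S₀|. Assume ‖ρ̃ − G̃β*‖∞ ≤ λ/2, and assume there exist an m×m real symmetric matrix G and constants c > 0, a ≥ 0 such that Λmin(G) ≥ c, ‖G̃ − G‖_max ≤ a, and 32·s·a ≤ c. Let β̂ be a minimizer over b ∈ ℝ^m of L(b) = (1/2)·bᵀG̃b − ρ̃ᵀb + λ‖b‖₁. Then ‖β̂ − β*‖₂ ≤ (6/c)·√s·λ and ‖β̂ − β*‖₁ ≤ (24/c)·s·λ. -/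
open Matrix Finset
open scoped Classical BigOperators

noncomputable section

/-- Entrywise maximum norm of a real matrix. -/
def maxNorm {m n : Type*} [Fintype m] [Fintype n] (A : Matrix m n ℝ) : ℝ :=
  ⨆ i, ⨆ j, |A i j|

set_option maxHeartbeats 1000000

/-- ℓ₂ and ℓ₁ estimation error bounds for the generalized Lasso. -/
theorem stmt_16 (m : ℕ) (hm : 1 ≤ m)
    (Gt : Matrix (Fin m) (Fin m) ℝ) (hGtsymm : Gt.IsSymm) (hGtpsd : Gt.PosSemidef)
    (ρt : Fin m → ℝ) (lam : ℝ) (hlam : 0 < lam) (βstar : Fin m → ℝ)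
    (hS₀ : (Finset.univ.filter fun j => βstar j ≠ 0).Nonempty)
    (hnoise : supNorm (ρt - Gt.mulVec βstar) ≤ lam / 2)
    (G : Matrix (Fin m) (Fin m) ℝ) (hGsymm : G.IsSymm)
    (c a : ℝ) (hc : 0 < c) (ha : 0 ≤ a)
    (hGmin : c ≤ lambdaMin G)
    (hGG : maxNorm (Gt - G) ≤ a)
    (hsa : 32 * ((Finset.univ.filter fun j => βstar j ≠ 0).card : ℝ) * a ≤ c)
    (βh : Fin m → ℝ)
    (hmin : ∀ b : Fin m → ℝ,
      (1 / 2 : ℝ) * (βh ⬝ᵥ Gt.mulVec βh) - ρt ⬝ᵥ βh + lam * ∑ j, |βh j| ≤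
        (1 / 2 : ℝ) * (b ⬝ᵥ Gt.mulVec b) - ρt ⬝ᵥ b + lam * ∑ j, |b j|) :
    Real.sqrt (∑ j, (βh j - βstar j) ^ 2) ≤
        (6 / c) * Real.sqrt ((Finset.univ.filter fun j => βstar j ≠ 0).card) * lam ∧
      (∑ j, |βh j - βstar j|) ≤
        (24 / c) * ((Finset.univ.filter fun j => βstar j ≠ 0).card : ℝ) * lam := by
  haveI : Nonempty (Fin m) := ⟨⟨0, hm⟩⟩
  set S : Finset (Fin m) := Finset.univ.filter fun j => βstar j ≠ 0 with hSdef
  set s : ℝ := (S.card : ℝ) with hsdef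
  have hs0 : (0 : ℝ) ≤ s := Nat.cast_nonneg _
  set D : Fin m → ℝ := βh - βstar with hDdef
  have hDa : ∀ j, D j = βh j - βstar j := fun j => rfl
  -- entrywise bounds
  have hε : ∀ i, |(ρt - Gt.mulVec βstar) i| ≤ lam / 2 := fun i =>
    le_trans (le_ciSup (f := fun i => |(ρt - Gt.mulVec βstar) i|)
      (Set.Finite.bddAbove (Set.finite_range _)) i) hnoise
  have hDel : ∀ i j, |(Gt - G) i j| ≤ a := fun i j =>
    le_trans (le_trans
      (le_ciSup (f := fun j => |(Gt - G) i j|) (Set.Finite.bddAbove (Set.finite_range _)) j)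
      (le_ciSup (f := fun i => ⨆ j, |(Gt - G) i j|)
        (Set.Finite.bddAbove (Set.finite_range _)) i)) hGG
  -- symmetry of the bilinear form
  have hsymmdp : ∀ u v : Fin m → ℝ, u ⬝ᵥ Gt.mulVec v = v ⬝ᵥ Gt.mulVec u := by
    intro u v
    rw [dotProduct_mulVec, ← hGtsymm, vecMul_transpose, dotProduct_comm, hGtsymm]
  -- expansion of the quadratic form
  have hβh : βh = βstar + D := by funext j; simp [hDa]
  have hexp : βh ⬝ᵥ Gt.mulVec βh =
      βstar ⬝ᵥ Gt.mulVec βstar + 2 * (βstar ⬝ᵥ Gt.mulVec D) + D ⬝ᵥ Gt.mulVec D := by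
    conv_lhs => rw [hβh]
    rw [Matrix.mulVec_add, dotProduct_add, add_dotProduct, add_dotProduct,
      hsymmdp D βstar]
    ring
  have hρ : ρt ⬝ᵥ βh = ρt ⬝ᵥ βstar + ρt ⬝ᵥ D := by
    conv_lhs => rw [hβh]; rw [dotProduct_add]
  -- basic inequality
  have hkey : (1 / 2 : ℝ) * (D ⬝ᵥ Gt.mulVec D) ≤
      (ρt - Gt.mulVec βstar) ⬝ᵥ D + lam * ((∑ j, |βstar j|) - ∑ j, |βh j|) := by
    have hm1 := hmin βstar
    rw [hexp, hρ] at hm1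
    have hsub : (ρt - Gt.mulVec βstar) ⬝ᵥ D = ρt ⬝ᵥ D - (Gt.mulVec βstar) ⬝ᵥ D :=
      sub_dotProduct _ _ _
    have h2 : (Gt.mulVec βstar) ⬝ᵥ D = βstar ⬝ᵥ Gt.mulVec D := by
      rw [dotProduct_comm, hsymmdp]
    linarith
  -- bound on the cross term
  have hεh : (ρt - Gt.mulVec βstar) ⬝ᵥ D ≤ (lam / 2) * ∑ j, |D j| := by
    rw [dotProduct, Finset.mul_sum]
    refine Finset.sum_le_sum fun i _ => ?_
    calc (ρt - Gt.mulVec βstar) i * D i ≤ |(ρt - Gt.mulVec βstar) i * D i| := le_abs_self _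
      _ = |(ρt - Gt.mulVec βstar) i| * |D i| := abs_mul _ _
      _ ≤ (lam / 2) * |D i| := mul_le_mul_of_nonneg_right (hε i) (abs_nonneg _)
  -- ℓ1 decomposition
  set A := ∑ j ∈ S, |D j| with hAdef
  set B := ∑ j ∈ Sᶜ, |D j| with hBdef
  have hA0 : 0 ≤ A := Finset.sum_nonneg fun j _ => abs_nonneg _
  have hB0 : 0 ≤ B := Finset.sum_nonneg fun j _ => abs_nonneg _
  have hAB : A + B = ∑ j, |D j| := Finset.sum_add_sum_compl S _
  have hl1 : (∑ j, |βstar j|) - ∑ j, |βh j| ≤ A - B := by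
    have e1 : (∑ j, |βstar j|) - ∑ j, |βh j| = ∑ j, (|βstar j| - |βh j|) :=
      (Finset.sum_sub_distrib _ _).symm
    have e2 : ∑ j, (|βstar j| - |βh j|) =
        (∑ j ∈ S, (|βstar j| - |βh j|)) + ∑ j ∈ Sᶜ, (|βstar j| - |βh j|) :=
      (Finset.sum_add_sum_compl S _).symm
    have e3 : ∑ j ∈ Sᶜ, (|βstar j| - |βh j|) = -B := by
      rw [hBdef, ← Finset.sum_neg_distrib]
      refine Finset.sum_congr rfl fun j hj => ?_
      have hz : βstar j = 0 := by
        have := Finset.mem_compl.mp hj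
        simp only [hSdef, Finset.mem_filter, Finset.mem_univ, true_and, not_not] at this
        exact this
      simp [hDa, hz]
    have e4 : ∑ j ∈ S, (|βstar j| - |βh j|) ≤ A := by
      rw [hAdef]
      refine Finset.sum_le_sum fun j _ => ?_
      have := abs_sub_abs_le_abs_sub (βstar j) (βh j)
      have : |βstar j - βh j| = |D j| := by rw [hDa, abs_sub_comm]
      calc |βstar j| - |βh j| ≤ |βstar j - βh j| := abs_sub_abs_le_abs_sub _ _
        _ = |D j| := this
    linarith [e1, e2, e3, e4]
  -- PSD nonnegativity
  have hQt0 : 0 ≤ D ⬝ᵥ Gt.mulVec D := by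
    have := hGtpsd.dotProduct_mulVec_nonneg D
    simpa using this
  -- combined basic inequality
  have hkey2 : (1 / 2 : ℝ) * (D ⬝ᵥ Gt.mulVec D) ≤ (3 * lam / 2) * A - (lam / 2) * B := by
    have t1 : lam * ((∑ j, |βstar j|) - ∑ j, |βh j|) ≤ lam * (A - B) :=
      mul_le_mul_of_nonneg_left hl1 hlam.le
    have t2 : (ρt - Gt.mulVec βstar) ⬝ᵥ D ≤ (lam / 2) * (A + B) := by
      rw [hAB]; exact hεh
    nlinarith [hkey]
  -- cone condition
  have hB3A : B ≤ 3 * A := by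
    by_contra hcon
    push_neg at hcon
    have : 0 < (lam / 2) * (B - 3 * A) := mul_pos (by linarith) (by linarith)
    nlinarith [hQt0, hkey2]
  set Q := ∑ j, (D j) ^ 2 with hQdef
  have hQ0 : 0 ≤ Q := Finset.sum_nonneg fun j _ => sq_nonneg _
  -- Cauchy-Schwarz on S
  have hcauchy : A ^ 2 ≤ s * Q := by
    have h1 : (∑ j ∈ S, |D j|) ^ 2 ≤ (S.card : ℝ) * ∑ j ∈ S, |D j| ^ 2 :=
      sq_sum_le_card_mul_sum_sq
    have h2 : ∑ j ∈ S, |D j| ^ 2 ≤ Q := by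
      simp only [sq_abs]
      exact Finset.sum_le_sum_of_subset_of_nonneg (Finset.subset_univ S)
        (fun j _ _ => sq_nonneg _)
    calc A ^ 2 ≤ (S.card : ℝ) * ∑ j ∈ S, |D j| ^ 2 := h1
      _ ≤ s * Q := mul_le_mul_of_nonneg_left h2 hs0
  -- eigenvalue bound : c * ‖x‖² ≤ xᵀGx
  have hGq : ∀ x : Fin m → ℝ, c * (∑ j, (x j) ^ 2) ≤ x ⬝ᵥ G.mulVec x := by
    intro x
    by_cases hx : (∑ j, (x j) ^ 2) = 0
    · have hx0 : x = 0 := by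
        funext j
        have := (Finset.sum_eq_zero_iff_of_nonneg (fun j _ => sq_nonneg (x j))).mp hx j
          (Finset.mem_univ j)
        exact pow_eq_zero_iff (by norm_num) |>.mp this
      simp [hx, hx0]
    · set q := ∑ j, (x j) ^ 2 with hqdef
      have hq0 : 0 < q := lt_of_le_of_ne (Finset.sum_nonneg fun j _ => sq_nonneg _) (Ne.symm hx)
      set y : Fin m → ℝ := (Real.sqrt q)⁻¹ • x with hydef
      have hyq : ∑ j, (y j) ^ 2 = 1 := by
        simp only [hydef, Pi.smul_apply, smul_eq_mul, mul_pow, ← Finset.mul_sum]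
        rw [← hqdef]
        rw [← Real.sqrt_inv, Real.sq_sqrt (by positivity)]
        field_simp
      have hbdd : BddBelow {r | ∃ z : Fin m → ℝ, ∑ i, (z i) ^ 2 = 1 ∧ r = z ⬝ᵥ G.mulVec z} := by
        refine ⟨-(∑ i, ∑ j, |G i j|), fun r hr => ?_⟩
        obtain ⟨z, hz1, hz2⟩ := hr
        have hz : ∀ i, |z i| ≤ 1 := by
          intro i
          have h1 : (z i) ^ 2 ≤ 1 := by
            calc (z i) ^ 2 ≤ ∑ j, (z j) ^ 2 :=
              Finset.single_le_sum (fun j _ => sq_nonneg (z j)) (Finset.mem_univ i)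
              _ = 1 := hz1
          have h2 := Real.sqrt_le_sqrt h1
          rwa [Real.sqrt_sq_eq_abs, Real.sqrt_one] at h2
        have : r = ∑ i, ∑ j, z i * (G i j * z j) := by
          rw [hz2]; simp [dotProduct, Matrix.mulVec, Finset.mul_sum]
        rw [this]
        rw [← Finset.sum_neg_distrib]
        refine Finset.sum_le_sum fun i _ => ?_
        rw [← Finset.sum_neg_distrib]
        refine Finset.sum_le_sum fun j _ => ?_
        have habs : |z i * (G i j * z j)| ≤ |G i j| := by
          rw [abs_mul, abs_mul]
          calc |z i| * (|G i j| * |z j|) ≤ 1 * (|G i j| * 1) := by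
                refine mul_le_mul (hz i) ?_ (by positivity) zero_le_one
                exact mul_le_mul_of_nonneg_left (hz j) (abs_nonneg _)
            _ = |G i j| := by ring
        linarith [(abs_le.mp habs).1]
      have hmem : (y ⬝ᵥ G.mulVec y) ∈
          {r | ∃ z : Fin m → ℝ, ∑ i, (z i) ^ 2 = 1 ∧ r = z ⬝ᵥ G.mulVec z} := ⟨y, hyq, rfl⟩
      have h1 : lambdaMin G ≤ y ⬝ᵥ G.mulVec y := csInf_le hbdd hmem
      have h2 : c ≤ y ⬝ᵥ G.mulVec y := le_trans hGmin h1
      have h3 : y ⬝ᵥ G.mulVec y = (x ⬝ᵥ G.mulVec x) / q := by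
        rw [hydef, Matrix.mulVec_smul, smul_dotProduct, dotProduct_smul]
        simp only [smul_eq_mul]
        rw [← mul_assoc, ← Real.sqrt_inv,
          Real.mul_self_sqrt (inv_nonneg.mpr hq0.le), inv_mul_eq_div]
      rw [h3] at h2
      have := (le_div_iff₀ hq0).mp h2
      linarith [this]
  -- perturbation bound
  have hpert : D ⬝ᵥ G.mulVec D - a * (∑ j, |D j|) ^ 2 ≤ D ⬝ᵥ Gt.mulVec D := by
    have hd : D ⬝ᵥ Gt.mulVec D - D ⬝ᵥ G.mulVec D = D ⬝ᵥ (Gt - G).mulVec D := by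
      rw [Matrix.sub_mulVec, dotProduct_sub]
    have inner : ∀ i, |((Gt - G).mulVec D) i| ≤ a * ∑ j, |D j| := by
      intro i
      have heq : ((Gt - G).mulVec D) i = ∑ j, (Gt - G) i j * D j := by
        simp [Matrix.mulVec, dotProduct]
      rw [heq]
      calc |∑ j, (Gt - G) i j * D j| ≤ ∑ j, |(Gt - G) i j * D j| :=
            Finset.abs_sum_le_sum_abs _ _
        _ ≤ ∑ j, a * |D j| := by
            refine Finset.sum_le_sum fun j _ => ?_
            rw [abs_mul]
            exact mul_le_mul_of_nonneg_right (hDel i j) (abs_nonneg _)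
        _ = a * ∑ j, |D j| := (Finset.mul_sum _ _ _).symm
    have habs : |D ⬝ᵥ (Gt - G).mulVec D| ≤ a * (∑ j, |D j|) ^ 2 := by
      calc |D ⬝ᵥ (Gt - G).mulVec D| = |∑ i, D i * ((Gt - G).mulVec D) i| := by
            rw [dotProduct]
        _ ≤ ∑ i, |D i * ((Gt - G).mulVec D) i| := Finset.abs_sum_le_sum_abs _ _
        _ ≤ ∑ i, |D i| * (a * ∑ j, |D j|) := by
            refine Finset.sum_le_sum fun i _ => ?_
            rw [abs_mul]
            exact mul_le_mul_of_nonneg_left (inner i) (abs_nonneg _)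
        _ = (∑ i, |D i|) * (a * ∑ j, |D j|) := by rw [← Finset.sum_mul]
        _ = a * (∑ j, |D j|) ^ 2 := by ring
    linarith [(abs_le.mp habs).1, hd]
  -- assemble
  have hL1 : ∑ j, |D j| ≤ 4 * A := by rw [← hAB]; linarith
  have hL10 : 0 ≤ ∑ j, |D j| := Finset.sum_nonneg fun j _ => abs_nonneg _
  have hL1sq : (∑ j, |D j|) ^ 2 ≤ 16 * (s * Q) := by
    calc (∑ j, |D j|) ^ 2 ≤ (4 * A) ^ 2 := pow_le_pow_left₀ hL10 hL1 2
      _ = 16 * A ^ 2 := by ring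
      _ ≤ 16 * (s * Q) := by linarith
  have haL1 : a * (∑ j, |D j|) ^ 2 ≤ c / 2 * Q := by
    have t1 : a * (∑ j, |D j|) ^ 2 ≤ a * (16 * (s * Q)) :=
      mul_le_mul_of_nonneg_left hL1sq ha
    have t2 : (32 * s * a) * Q ≤ c * Q := mul_le_mul_of_nonneg_right hsa hQ0
    have t3 : a * (16 * (s * Q)) = (32 * s * a) * Q / 2 := by ring
    linarith
  have hQth : c / 2 * Q ≤ D ⬝ᵥ Gt.mulVec D := by
    have := hGq D
    rw [← hQdef] at this
    linarith
  have hmain : c * Q ≤ 6 * lam * A := by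
    have t : 0 ≤ (lam / 2) * B := mul_nonneg (by linarith) hB0
    linarith [hkey2, hQth]
  -- ℓ2 bound
  have hA_le : A ≤ Real.sqrt s * Real.sqrt Q := by
    have h1 : A = Real.sqrt (A ^ 2) := (Real.sqrt_sq hA0).symm
    rw [h1, ← Real.sqrt_mul hs0 Q]
    exact Real.sqrt_le_sqrt hcauchy
  have hsq : Real.sqrt Q ≤ 6 / c * Real.sqrt s * lam := by
    have hQmul : Real.sqrt Q * Real.sqrt Q = Q := Real.mul_self_sqrt hQ0
    by_cases hq : Real.sqrt Q = 0
    · rw [hq]; exact mul_nonneg (mul_nonneg (div_nonneg (by norm_num) hc.le) (Real.sqrt_nonneg _)) hlam.le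
    · have hqpos : 0 < Real.sqrt Q := (Real.sqrt_nonneg Q).lt_of_ne (Ne.symm hq)
      have h1 : c * (Real.sqrt Q * Real.sqrt Q) ≤ 6 * lam * (Real.sqrt s * Real.sqrt Q) := by
        rw [hQmul]
        calc c * Q ≤ 6 * lam * A := hmain
          _ ≤ 6 * lam * (Real.sqrt s * Real.sqrt Q) :=
            mul_le_mul_of_nonneg_left hA_le (by positivity)
      have h2 : c * Real.sqrt Q ≤ 6 * lam * Real.sqrt s :=
        le_of_mul_le_mul_right (by nlinarith) hqpos
      have h3 : Real.sqrt Q ≤ 6 * lam * Real.sqrt s / c := (le_div_iff₀ hc).mpr (by linarith)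
      have h4 : 6 / c * Real.sqrt s * lam = 6 * lam * Real.sqrt s / c := by ring
      linarith [h3, h4.ge]
  -- ℓ1 bound
  have hl1fin : ∑ j, |D j| ≤ 24 / c * s * lam := by
    have h1 : ∑ j, |D j| ≤ 4 * (Real.sqrt s * Real.sqrt Q) := by
      calc ∑ j, |D j| ≤ 4 * A := hL1
        _ ≤ 4 * (Real.sqrt s * Real.sqrt Q) := by linarith [hA_le]
    have h2 : Real.sqrt s * Real.sqrt Q ≤ Real.sqrt s * (6 / c * Real.sqrt s * lam) :=
      mul_le_mul_of_nonneg_left hsq (Real.sqrt_nonneg s)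
    have h3 : Real.sqrt s * Real.sqrt s = s := Real.mul_self_sqrt hs0
    have h4 : Real.sqrt s * (6 / c * Real.sqrt s * lam) =
        6 / c * (Real.sqrt s * Real.sqrt s) * lam := by ring
    rw [h3] at h4
    have h5 : (6 : ℝ) / c * s * lam = 24 / c * s * lam / 4 := by ring
    linarith
  constructor
  · have e : ∑ j, (βh j - βstar j) ^ 2 = Q := by
      rw [hQdef]; exact Finset.sum_congr rfl fun j _ => by rw [hDa]
    rw [e]
    exact hsq
  · have e : ∑ j, |βh j - βstar j| = ∑ j, |D j| := by
      exact Finset.sum_congr rfl fun j _ => by rw [hDa]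
    rw [e]
    exact hl1fin

end
end
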